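/- arXiv:0809.0384 — 9 statements merged into one kernel-verified Lean document; each statement's English description precedes it below -/
import Mathlib

section
/- Let V be a finite-dimensional complex vector space and let 𝒜 be a finite essential collection of linear hyperplanes in V (essential means ⋂_{H∈𝒜} H = {0}). If P ∈ GL(V) satisfies P(H) ⊆ H for every H ∈ 𝒜, then P is semisimple (diagonalizable). -/
/-!
An invariant hyperplane `ker f` of `T` makes `f` an eigenvector of the transpose:
`f ∘ T = c • f`, so `T - c` maps `V` into `ker f`. The product of the factors `X - c` over the
distinct eigenvalues `c` therefore sends `V` into the intersection of the hyperplanes, which is `0`;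
thus `T` is annihilated by a polynomial with simple roots, i.e. it is semisimple.
-/

open Polynomial LinearMap

section

variable {K V : Type*} [Field K] [AddCommGroup V] [Module K V]

theorem LinearMap.exists_smul_eq_of_ker_le {f g : V →ₗ[K] K} (h : ker f ≤ ker g) :
    ∃ c : K, c • f = g := by
  have := mem_span_of_iInf_ker_le_ker (L := fun _ : Unit ↦ f) (by simpa using h)
  simpa [Submodule.mem_span_singleton] using this

theorem LinearMap.exists_comp_eq_smul_of_map_ker_le {f : V →ₗ[K] K} {T : Module.End K V}
    (h : (ker f).map T ≤ ker f) : ∃ c : K, f ∘ₗ T = c • f := by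
  obtain ⟨c, hc⟩ := exists_smul_eq_of_ker_le (f := f) (g := f ∘ₗ T)
    (by rwa [ker_comp, ← Submodule.map_le_iff_le_comap])
  exact ⟨c, hc.symm⟩

theorem LinearMap.apply_aeval_prod_X_sub_C_eq_zero {f : V →ₗ[K] K} {T : Module.End K V} {c : K}
    (hc : f ∘ₗ T = c • f) {s : Finset K} (hcs : c ∈ s) (v : V) :
    f (aeval T (∏ a ∈ s, (X - C a)) v) = 0 := by
  classical
  rw [← Finset.mul_prod_erase s _ hcs, map_mul, Module.End.mul_apply]
  set w := aeval T (∏ a ∈ s.erase c, (X - C a)) v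
  have hTw : f (T w) = c * f w := LinearMap.congr_fun hc w
  simp [Module.algebraMap_end_apply, hTw]

theorem Module.End.isSemisimple_of_comp_eq_smul {ι : Type*} [Finite ι] {T : Module.End K V}
    (f : ι → V →ₗ[K] K) (c : ι → K) (hc : ∀ i, f i ∘ₗ T = c i • f i)
    (hf : ⨅ i, ker (f i) = ⊥) : T.IsSemisimple := by
  classical
  have := Fintype.ofFinite ι
  refine isSemisimple_of_squarefree_aeval_eq_zero (p := ∏ a ∈ Finset.univ.image c, (X - C a))
    (separable_prod_X_sub_C_iff'.mpr fun _ _ _ _ h ↦ h).squarefree ?_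
  ext v
  rw [LinearMap.zero_apply, ← Submodule.mem_bot K, ← hf, Submodule.mem_iInf]
  exact fun i ↦
    apply_aeval_prod_X_sub_C_eq_zero (hc i) (Finset.mem_image_of_mem c (Finset.mem_univ i)) v

end

theorem stmt_0_general {V : Type*} [AddCommGroup V] [Module ℂ V]
    (𝒜 : Set (Submodule ℂ V)) (hfin : 𝒜.Finite)
    (hhyp : ∀ H ∈ 𝒜, ∃ f : V →ₗ[ℂ] ℂ, f ≠ 0 ∧ LinearMap.ker f = H)
    (hess : sInf 𝒜 = (⊥ : Submodule ℂ V))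
    (P : V ≃ₗ[ℂ] V)
    (hP : ∀ H ∈ 𝒜, Submodule.map (P : V →ₗ[ℂ] V) H ≤ H) :
    Module.End.IsSemisimple (P : V →ₗ[ℂ] V) := by
  have := hfin.to_subtype
  choose f hf using fun H : 𝒜 ↦ hhyp H H.2
  have hker (H : 𝒜) : ker (f H) = H := (hf H).2
  choose c hc using fun H : 𝒜 ↦ exists_comp_eq_smul_of_map_ker_le ((hker H).symm ▸ hP H H.2)
  refine Module.End.isSemisimple_of_comp_eq_smul f c hc ?_
  simpa [hker, ← sInf_eq_iInf'] using hess

/-- If `𝒜` is a finite essential collection of hyperplanes in a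
finite-dimensional complex vector space `V` and `P ∈ GL(V)` maps every `H ∈ 𝒜` into itself,
then `P` is semisimple (diagonalizable). -/
theorem stmt_0 {V : Type*} [AddCommGroup V] [Module ℂ V] [FiniteDimensional ℂ V]
    (𝒜 : Set (Submodule ℂ V)) (hfin : 𝒜.Finite)
    (hhyp : ∀ H ∈ 𝒜, ∃ f : V →ₗ[ℂ] ℂ, f ≠ 0 ∧ LinearMap.ker f = H)
    (hess : sInf 𝒜 = (⊥ : Submodule ℂ V))
    (P : V ≃ₗ[ℂ] V)
    (hP : ∀ H ∈ 𝒜, Submodule.map (P : V →ₗ[ℂ] V) H ≤ H) :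
    Module.End.IsSemisimple (P : V →ₗ[ℂ] V) :=
  stmt_0_general 𝒜 hfin hhyp hess P hP
end

section
/- Let V be a finite-dimensional complex vector space and let 𝒜 be a finite essential collection of linear hyperplanes in V. If x ∈ GL(V) is unipotent (i.e., x − 1 is nilpotent) and x permutes 𝒜 (i.e., x(H) ∈ 𝒜 for every H ∈ 𝒜), then x is the identity. -/
/-!
Since `x` permutes the finite set `𝒜`, some power `y = x ^ m` with `m > 0` fixes every
hyperplane `H = ker f` of `𝒜`. Then `f ∘ (y - 1) = c • f`, and nilpotency of `y - 1` forces
`c • f = 0`, so `y - 1` maps `V` into every `H ∈ 𝒜`, hence into `⋂ 𝒜 = 0`: `y = 1`. Thus `x` is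
annihilated by the separable polynomial `X ^ m - 1`, so it is semisimple, and a semisimple
unipotent map is the identity.
-/

open Function Set in
theorem Set.Finite.exists_pos_iterate_eq_self {α : Type*} {f : α → α} {s : Set α}
    (hs : s.Finite) (hmaps : MapsTo f s s) (hinj : InjOn f s) :
    ∃ n > 0, ∀ a ∈ s, f^[n] a = a := by
  have := hs.fintype
  have hid : hmaps.restrict^[(Fintype.card s).factorial] = id :=
    injective_iff_iterate_factorial_card_eq_id.mp (hmaps.restrict_inj.mpr hinj)
  refine ⟨(Fintype.card s).factorial, Nat.factorial_pos _, fun a ha => ?_⟩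
  rw [← hmaps.coe_iterate_restrict ⟨a, ha⟩, hid, id]

theorem Submodule.map_iterate {R M : Type*} [Semiring R] [AddCommMonoid M] [Module R M]
    (f : Module.End R M) (n : ℕ) (p : Submodule R M) :
    (Submodule.map f)^[n] p = p.map (f ^ n) := by
  induction n with
  | zero => simp [Module.End.one_eq_id]
  | succ n ih =>
    rw [Function.iterate_succ_apply', ih, pow_succ', Module.End.mul_eq_comp, Submodule.map_comp]

theorem isNilpotent_pow_sub_one {R : Type*} [Ring R] {a : R} (h : IsNilpotent (a - 1)) (n : ℕ) :
    IsNilpotent (a ^ n - 1) := by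
  have hcomm : Commute (∑ i ∈ Finset.range n, a ^ i) (a - 1) :=
    (geom_sum_mul a n).trans (mul_geom_sum a n).symm
  rw [← geom_sum_mul]
  exact hcomm.isNilpotent_mul_left h

theorem LinearMap.range_le_ker_of_isNilpotent {K V : Type*} [Field K] [AddCommGroup V]
    [Module K V]
    {N : Module.End K V} (hN : IsNilpotent N) (f : V →ₗ[K] K)
    (hf : ker f ≤ (ker f).comap N) : range N ≤ ker f := by
  obtain ⟨c, hc⟩ : ∃ c : K, c • f = f ∘ₗ N := by
    have : ⨅ _ : Unit, ker f ≤ ker (f ∘ₗ N) := by simpa [ker_comp] using hf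
    simpa [Submodule.mem_span_singleton] using mem_span_of_iInf_ker_le_ker this
  have hpow : ∀ k : ℕ, f ∘ₗ N ^ k = c ^ k • f := by
    intro k
    induction k with
    | zero => simp [Module.End.one_eq_id]
    | succ k ih =>
      rw [pow_succ', Module.End.mul_eq_comp, ← comp_assoc, ← hc, smul_comp, ih, smul_smul,
        pow_succ']
  obtain ⟨r, hr⟩ := hN
  have hzero : c ^ r • f = 0 := by rw [← hpow, hr, comp_zero]
  have hfN : f ∘ₗ N = 0 := by
    rw [← hc]
    rcases smul_eq_zero.mp hzero with h | h
    · rw [eq_zero_of_pow_eq_zero h, zero_smul]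
    · simp [h]
  rw [range_le_ker_iff, hfN]

theorem Module.End.eq_one_of_isNilpotent_sub_one_of_pow_eq_one {K M : Type*} [Field K]
    [AddCommGroup M] [Module K M] {a : Module.End K M} (hnil : IsNilpotent (a - 1)) {n : ℕ}
    (hn : (n : K) ≠ 0) (han : a ^ n = 1) : a = 1 := by
  have hss : a.IsSemisimple :=
    isSemisimple_of_squarefree_aeval_eq_zero
      (Polynomial.separable_X_pow_sub_C 1 hn one_ne_zero).squarefree (by simp [han])
  have hss' : (a - algebraMap K _ 1).IsSemisimple := isSemisimple_sub_algebraMap_iff.mpr hss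
  rw [map_one] at hss'
  exact sub_eq_zero.mp (eq_zero_of_isNilpotent_isSemisimple hnil hss')

theorem stmt_1_general {V : Type*} [AddCommGroup V] [Module ℂ V]
    (𝒜 : Set (Submodule ℂ V)) (hfin : 𝒜.Finite)
    (hhyp : ∀ H ∈ 𝒜, ∃ f : V →ₗ[ℂ] ℂ, f ≠ 0 ∧ LinearMap.ker f = H)
    (hess : sInf 𝒜 = (⊥ : Submodule ℂ V))
    (x : V ≃ₗ[ℂ] V)
    (hunip : IsNilpotent ((x : V →ₗ[ℂ] V) - LinearMap.id))
    (hperm : ∀ H ∈ 𝒜, Submodule.map (x : V →ₗ[ℂ] V) H ∈ 𝒜) :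
    x = LinearEquiv.refl ℂ V := by
  set X : Module.End ℂ V := (x : V →ₗ[ℂ] V)
  obtain ⟨m, hm, hperiodic⟩ := hfin.exists_pos_iterate_eq_self (f := Submodule.map X) hperm
    (Submodule.map_injective_of_injective x.injective).injOn
  have hunip' : IsNilpotent (X ^ m - 1) := isNilpotent_pow_sub_one hunip m
  have hrange : ∀ H ∈ 𝒜, LinearMap.range (X ^ m - 1) ≤ H := by
    intro H hH
    obtain ⟨f, -, rfl⟩ := hhyp H hH
    refine LinearMap.range_le_ker_of_isNilpotent hunip' f fun v hv => ?_
    have hstable : (LinearMap.ker f).map (X ^ m) = LinearMap.ker f := by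
      rw [← Submodule.map_iterate]; exact hperiodic _ hH
    exact sub_mem (hstable ▸ Submodule.mem_map_of_mem hv) hv
  have hXm : X ^ m = 1 := by
    rw [← sub_eq_zero, ← LinearMap.range_eq_bot, eq_bot_iff, ← hess]
    exact le_sInf hrange
  exact LinearEquiv.toLinearMap_injective
    (Module.End.eq_one_of_isNilpotent_sub_one_of_pow_eq_one hunip (by exact_mod_cast hm.ne') hXm)

/-- If `𝒜` is a finite essential collection of hyperplanes in a
finite-dimensional complex vector space `V` and `x ∈ GL(V)` is unipotent and permutes `𝒜`,
then `x` is the identity. -/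
theorem stmt_1 {V : Type*} [AddCommGroup V] [Module ℂ V] [FiniteDimensional ℂ V]
    (𝒜 : Set (Submodule ℂ V)) (hfin : 𝒜.Finite)
    (hhyp : ∀ H ∈ 𝒜, ∃ f : V →ₗ[ℂ] ℂ, f ≠ 0 ∧ LinearMap.ker f = H)
    (hess : sInf 𝒜 = (⊥ : Submodule ℂ V))
    (x : V ≃ₗ[ℂ] V)
    (hunip : IsNilpotent ((x : V →ₗ[ℂ] V) - LinearMap.id))
    (hperm : ∀ H ∈ 𝒜, Submodule.map (x : V →ₗ[ℂ] V) H ∈ 𝒜) :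
    x = LinearEquiv.refl ℂ V :=
  stmt_1_general 𝒜 hfin hhyp hess x hunip hperm
end

section
/- Let W ⊆ GL(V) be a finite group generated by pseudo-reflections whose reflection arrangement 𝒜 is essential. If 𝒜 is irreducible—i.e., there is no direct sum decomposition V = V₁ ⊕ V₂ with V₁ ≠ 0 and V₂ ≠ 0 such that every H ∈ 𝒜 contains V₁ or contains V₂—then W acts irreducibly on V. -/
/-- `s` is a pseudo-reflection: an automorphism of finite order whose fixed subspace
`ker (s - 1)` is a hyperplane (the kernel of some nonzero linear form). -/
def IsPseudoReflection {V : Type*} [AddCommGroup V] [Module ℂ V] (s : V ≃ₗ[ℂ] V) : Prop :=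
  IsOfFinOrder s ∧ ∃ f : V →ₗ[ℂ] ℂ, f ≠ 0 ∧
    LinearMap.ker f = LinearMap.ker ((s : V →ₗ[ℂ] V) - LinearMap.id)

/-- The reflection arrangement of `W`: the set of hyperplanes `ker (s - 1)` for `s` a
pseudo-reflection in `W`. -/
def reflArrangement {V : Type*} [AddCommGroup V] [Module ℂ V] (W : Subgroup (V ≃ₗ[ℂ] V)) :
    Set (Submodule ℂ V) :=
  {H | ∃ s ∈ W, IsPseudoReflection s ∧ LinearMap.ker ((s : V →ₗ[ℂ] V) - LinearMap.id) = H}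


/-!
By Maschke's theorem a proper nonzero `W`-stable subspace `U` has a `W`-stable complement
`U'`. For a pseudo-reflection `s ∈ W`, the map `s - 1` preserves `U` and `U'` and has rank one,
so if it were nonzero on both, its image would be a line inside `U ⊓ U' = ⊥`. Hence every
reflecting hyperplane contains `U` or `U'`, contradicting irreducibility of the arrangement.
-/

theorem Representation.exists_isCompl_forall_mem_of_forall_mem {k G V : Type*} [Group G] [Field k]
    [Finite G] [NeZero (Nat.card G : k)] [AddCommGroup V] [Module k V]
    (ρ : Representation k G V) (U : Submodule k V) (hU : ∀ g, ∀ v ∈ U, ρ g v ∈ U) :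
    ∃ U' : Submodule k V, IsCompl U U' ∧ ∀ g, ∀ v ∈ U', ρ g v ∈ U' := by
  obtain ⟨τ, hτ⟩ := exists_isCompl (⟨U, fun g _ hv ↦ hU g _ hv⟩ : Subrepresentation ρ)
  refine ⟨τ.toSubmodule, ⟨?_, ?_⟩, fun g _ hv ↦ τ.apply_mem_toSubmodule g hv⟩
  · exact disjoint_iff.2 (congrArg Subrepresentation.toSubmodule hτ.inf_eq_bot)
  · exact codisjoint_iff.2 (congrArg Subrepresentation.toSubmodule hτ.sup_eq_top)

theorem LinearMap.le_ker_or_le_ker_of_ker_eq_ker_linearForm {K V : Type*} [Field K]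
    [AddCommGroup V] [Module K V] {T : V →ₗ[K] V} {f : V →ₗ[K] K} (hf : ker f = ker T)
    {U U' : Submodule K V} (hUU' : Disjoint U U') (hU : ∀ v ∈ U, T v ∈ U)
    (hU' : ∀ v ∈ U', T v ∈ U') : U ≤ ker T ∨ U' ≤ ker T := by
  by_contra! h
  obtain ⟨u, hu, hTu⟩ := SetLike.not_le_iff_exists.1 h.1
  obtain ⟨u', hu', hTu'⟩ := SetLike.not_le_iff_exists.1 h.2
  have hfu' : f u' ≠ 0 := fun h0 ↦ hTu' (hf ▸ mem_ker.2 h0)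
  have hcomb : f u' • u - f u • u' ∈ ker T := by
    rw [← hf, mem_ker, map_sub, map_smul, map_smul, smul_eq_mul, smul_eq_mul, mul_comm, sub_self]
  rw [mem_ker, map_sub, map_smul, map_smul, sub_eq_zero] at hcomb
  have hmem : f u' • T u ∈ U ⊓ U' :=
    ⟨U.smul_mem _ (hU u hu), hcomb ▸ U'.smul_mem _ (hU' u' hu')⟩
  rw [hUU'.eq_bot, Submodule.mem_bot, smul_eq_zero] at hmem
  exact hmem.elim hfu' fun h0 ↦ hTu (mem_ker.2 h0)

theorem le_or_le_of_mem_reflArrangement {V : Type*} [AddCommGroup V] [Module ℂ V]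
    {W : Subgroup (V ≃ₗ[ℂ] V)} {U U' : Submodule ℂ V} (hUU' : Disjoint U U')
    (hU : ∀ w ∈ W, ∀ v ∈ U, w v ∈ U) (hU' : ∀ w ∈ W, ∀ v ∈ U', w v ∈ U')
    {H : Submodule ℂ V} (hH : H ∈ reflArrangement W) : U ≤ H ∨ U' ≤ H := by
  obtain ⟨s, hs, ⟨-, f, -, hf⟩, rfl⟩ := hH
  refine LinearMap.le_ker_or_le_ker_of_ker_eq_ker_linearForm hf hUU'
    (fun v hv ↦ ?_) (fun v hv ↦ ?_)
  · simpa using U.sub_mem (hU s hs v hv) hv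
  · simpa using U'.sub_mem (hU' s hs v hv) hv

theorem stmt_4_general {V : Type*} [AddCommGroup V] [Module ℂ V]
    (W : Subgroup (V ≃ₗ[ℂ] V)) (hfin : (W : Set (V ≃ₗ[ℂ] V)).Finite)
    (hirrarr : ¬ ∃ V₁ V₂ : Submodule ℂ V, V₁ ≠ ⊥ ∧ V₂ ≠ ⊥ ∧ IsCompl V₁ V₂ ∧
        ∀ H ∈ reflArrangement W, V₁ ≤ H ∨ V₂ ≤ H) :
    ∀ U : Submodule ℂ V,
      (∀ w ∈ W, Submodule.map (w : V →ₗ[ℂ] V) U ≤ U) → U = ⊥ ∨ U = ⊤ := by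
  intro U hU
  have : Finite W := hfin.to_subtype
  have hUinv : ∀ w ∈ W, ∀ v ∈ U, w v ∈ U := fun w hw v hv ↦ hU w hw ⟨v, hv, rfl⟩
  obtain ⟨U', hUU', hU'⟩ := (Representation.ofDistribMulAction ℂ W V)
    |>.exists_isCompl_forall_mem_of_forall_mem U fun w ↦ hUinv w w.2
  by_contra! hU_ne
  have hU'_ne : U' ≠ ⊥ := fun hU'bot ↦ hU_ne.2 (eq_top_of_isCompl_bot (hU'bot ▸ hUU'))
  exact hirrarr ⟨U, U', hU_ne.1, hU'_ne, hUU', fun H hH ↦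
    le_or_le_of_mem_reflArrangement hUU'.disjoint hUinv (fun w hw ↦ hU' ⟨w, hw⟩) hH⟩

/-- If the essential reflection arrangement of a finite pseudo-reflection
group `W` is irreducible (no direct sum decomposition `V = V₁ ⊕ V₂` with both summands
nonzero such that every hyperplane contains `V₁` or `V₂`), then `W` acts irreducibly
on `V`. -/
theorem stmt_4 {V : Type*} [AddCommGroup V] [Module ℂ V] [FiniteDimensional ℂ V] [Nontrivial V]
    (W : Subgroup (V ≃ₗ[ℂ] V)) (hfin : (W : Set (V ≃ₗ[ℂ] V)).Finite)
    (hgen : W = Subgroup.closure {s : V ≃ₗ[ℂ] V | s ∈ W ∧ IsPseudoReflection s})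
    (hess : sInf (reflArrangement W) = (⊥ : Submodule ℂ V))
    (hirrarr : ¬ ∃ V₁ V₂ : Submodule ℂ V, V₁ ≠ ⊥ ∧ V₂ ≠ ⊥ ∧ IsCompl V₁ V₂ ∧
        ∀ H ∈ reflArrangement W, V₁ ≤ H ∨ V₂ ≤ H) :
    ∀ U : Submodule ℂ V,
      (∀ w ∈ W, Submodule.map (w : V →ₗ[ℂ] V) U ≤ U) → U = ⊥ ∨ U = ⊤ :=
  stmt_4_general W hfin hirrarr
end

section
/- Let W ⊆ GL(V) be a finite group generated by pseudo-reflections, with a W-invariant hermitian inner product on V. If V admits a basis L consisting of roots of W such that the graph on L joining two roots whenever they are not orthogonal is connected, then W acts irreducibly on V. -/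
open scoped ComplexInnerProductSpace

/-- `v` is a root of `W`: a (nonzero) eigenvector of some pseudo-reflection `s ∈ W`
with `s v ≠ v`. -/
def IsRoot {V : Type*} [AddCommGroup V] [Module ℂ V] (W : Subgroup (V ≃ₗ[ℂ] V)) (v : V) :
    Prop :=
  v ≠ 0 ∧ ∃ s ∈ W, IsPseudoReflection s ∧ (∃ c : ℂ, s v = c • v) ∧ s v ≠ v

theorem SimpleGraph.Preconnected.mem_of_adj_closed {α : Type*} {G : SimpleGraph α}
    (hG : G.Preconnected) {S : Set α} (hS : ∀ a b, G.Adj a b → a ∈ S → b ∈ S) {a : α}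
    (ha : a ∈ S) (b : α) : b ∈ S := by
  by_contra hb
  obtain ⟨p⟩ := hG a b
  obtain ⟨d, -, hd₁, hd₂⟩ := p.exists_boundary_dart S ha hb
  exact hd₂ (hS _ _ d.adj hd₁)

section PseudoReflection

variable {K V : Type*} [Field K] [AddCommGroup V] [Module K V]

/-- The image of `s - 1` is spanned by `s v - v` for any single `v` moved by `s`. -/
theorem smul_apply_sub_self_eq_of_ker_eq {s : V →ₗ[K] V} {f : V →ₗ[K] K}
    (hker : LinearMap.ker f = LinearMap.ker (s - LinearMap.id)) (u v : V) :
    f v • (s u - u) = f u • (s v - v) := by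
  have hfix : (s - LinearMap.id : V →ₗ[K] V) (f v • u - f u • v) = 0 := by
    rw [← LinearMap.mem_ker, ← hker, LinearMap.mem_ker, map_sub, map_smul, map_smul,
      smul_eq_mul, smul_eq_mul, mul_comm, sub_self]
  simp only [LinearMap.sub_apply, LinearMap.id_apply, map_sub, map_smul] at hfix
  linear_combination (norm := module) hfix

theorem mem_or_forall_apply_eq_of_ker_eq {s : V →ₗ[K] V} {f : V →ₗ[K] K}
    (hker : LinearMap.ker f = LinearMap.ker (s - LinearMap.id)) {U : Submodule K V}
    (hU : ∀ x ∈ U, s x ∈ U) {v : V} {c : K} (hv : s v = c • v) (hmoved : s v ≠ v) :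
    v ∈ U ∨ ∀ u ∈ U, s u = u := by
  refine or_iff_not_imp_right.mpr fun hfixed => ?_
  push Not at hfixed
  obtain ⟨u, hu, hsu⟩ := hfixed
  have hfu : f u ≠ 0 := fun h => hsu <| by
    have : u ∈ LinearMap.ker (s - LinearMap.id) := hker ▸ h
    simpa [sub_eq_zero] using this
  have hc : c - 1 ≠ 0 := fun h => hmoved <| by rw [hv, sub_eq_zero.mp h, one_smul]
  have hmem : (c - 1) • v ∈ U := by
    have : f u • (s v - v) ∈ U :=
      smul_apply_sub_self_eq_of_ker_eq hker u v ▸ U.smul_mem _ (U.sub_mem (hU u hu) hu)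
    rwa [U.smul_mem_iff hfu, hv, ← one_smul K v, smul_smul, mul_one, ← sub_smul] at this
  exact (U.smul_mem_iff hc).mp hmem

end PseudoReflection

theorem inner_eq_zero_of_apply_eq_self_of_apply_eq_smul {𝕜 V : Type*} [RCLike 𝕜]
    [NormedAddCommGroup V] [InnerProductSpace 𝕜 V] {s : V →ₗ[𝕜] V}
    (hs : ∀ x y, inner 𝕜 (s x) (s y) = inner 𝕜 x y) {u v : V} {c : 𝕜}
    (hu : s u = u) (hv : s v = c • v) (hmoved : s v ≠ v) : inner 𝕜 u v = 0 := by
  have hc : c ≠ 1 := by rintro rfl; exact hmoved (by rw [hv, one_smul])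
  have h : c * inner 𝕜 u v = inner 𝕜 u v := by simpa [hu, hv, inner_smul_right] using hs u v
  by_contra hne
  exact hc (mul_eq_right₀ hne |>.mp h)

theorem IsRoot.mem_or_mem_orthogonal {V : Type*} [NormedAddCommGroup V]
    [InnerProductSpace ℂ V] {W : Subgroup (V ≃ₗ[ℂ] V)}
    (hinv : ∀ w ∈ W, ∀ x y : V, ⟪w x, w y⟫ = ⟪x, y⟫) {U : Submodule ℂ V}
    (hU : ∀ w ∈ W, Submodule.map (w : V →ₗ[ℂ] V) U ≤ U) {v : V} (hv : IsRoot W v) :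
    v ∈ U ∨ v ∈ Uᗮ := by
  obtain ⟨-, s, hsW, ⟨-, f, -, hker⟩, ⟨c, hc⟩, hmoved⟩ := hv
  refine (mem_or_forall_apply_eq_of_ker_eq (s := (s : V →ₗ[ℂ] V)) hker
    (fun x hx => hU s hsW ⟨x, hx, rfl⟩) hc hmoved).imp_right fun hfixed u hu => ?_
  exact inner_eq_zero_of_apply_eq_self_of_apply_eq_smul (s := (s : V →ₗ[ℂ] V))
    (hinv s hsW) (hfixed u hu) hc hmoved

theorem stmt_6_general {V : Type*} [NormedAddCommGroup V] [InnerProductSpace ℂ V]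
    (W : Subgroup (V ≃ₗ[ℂ] V))
    (hinv : ∀ w ∈ W, ∀ x y : V, ⟪w x, w y⟫ = ⟪x, y⟫)
    (L : Finset V)
    (hroots : ∀ v ∈ L, IsRoot W v)
    (hspan : Submodule.span ℂ (L : Set V) = ⊤)
    (hconn : (SimpleGraph.fromRel fun v₁ v₂ : L => ⟪(v₁ : V), (v₂ : V)⟫ ≠ 0).Connected) :
    ∀ U : Submodule ℂ V,
      (∀ w ∈ W, Submodule.map (w : V →ₗ[ℂ] V) U ≤ U) → U = ⊥ ∨ U = ⊤ := by
  intro U hU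
  have hside (v : L) : (v : V) ∈ U ∨ (v : V) ∈ Uᗮ :=
    (hroots v v.2).mem_or_mem_orthogonal hinv hU
  by_cases hsome : ∃ v : L, (v : V) ∈ U
  · obtain ⟨v, hv⟩ := hsome
    right
    rw [eq_top_iff, ← hspan, Submodule.span_le]
    refine fun b hb => hconn.preconnected.mem_of_adj_closed (S := {x | (x : V) ∈ U})
      (fun a b hab ha => ?_) hv ⟨b, hb⟩
    obtain ⟨-, hab | hba⟩ := SimpleGraph.fromRel_adj _ a b |>.mp hab
    · exact (hside b).resolve_right fun hb => hab (hb a ha)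
    · exact (hside b).resolve_right fun hb => hba (inner_eq_zero_symm.mp (hb a ha))
  · push Not at hsome
    left
    have hperp : ⊤ ≤ Uᗮ := by
      rw [← hspan, Submodule.span_le]
      exact fun b hb => (hside ⟨b, hb⟩).resolve_left (hsome _)
    exact Submodule.isOrtho_top_right.mp (Submodule.IsOrtho.symm hperp)

/-- If `V` admits a basis `L` of roots of the finite pseudo-reflection
group `W` (which preserves a hermitian inner product on `V`) whose graph (joining two
roots iff they are not orthogonal) is connected, then `W` acts irreducibly on `V`. -/
theorem stmt_6 {V : Type*} [NormedAddCommGroup V] [InnerProductSpace ℂ V]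
    [FiniteDimensional ℂ V] [Nontrivial V]
    (W : Subgroup (V ≃ₗ[ℂ] V)) (hfin : (W : Set (V ≃ₗ[ℂ] V)).Finite)
    (hgen : W = Subgroup.closure {s : V ≃ₗ[ℂ] V | s ∈ W ∧ IsPseudoReflection s})
    (hinv : ∀ w ∈ W, ∀ x y : V, ⟪w x, w y⟫ = ⟪x, y⟫)
    (L : Finset V)
    (hroots : ∀ v ∈ L, IsRoot W v)
    (hli : LinearIndependent ℂ (fun v : L => (v : V)))
    (hspan : Submodule.span ℂ (L : Set V) = ⊤)
    (hconn : (SimpleGraph.fromRel fun v₁ v₂ : L => ⟪(v₁ : V), (v₂ : V)⟫ ≠ 0).Connected) :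
    ∀ U : Submodule ℂ V,
      (∀ w ∈ W, Submodule.map (w : V →ₗ[ℂ] V) U ≤ U) → U = ⊥ ∨ U = ⊤ :=
  stmt_6_general W hinv L hroots hspan hconn
end

section
/- Let W ⊆ GL(V) be a finite group generated by pseudo-reflections acting irreducibly on V, with dim V = n ≥ 2, and fix a W-invariant hermitian inner product on V. Then there exists a nonzero vector v' ∈ V such that the parabolic subgroup W₀ = {w ∈ W : w·v' = v'} stabilizes the orthogonal complement (ℂv')^⊥, which has dimension n − 1, and W₀ acts irreducibly on (ℂv')^⊥. -/
open Module

open scoped ComplexInnerProductSpace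

/-!
A unitary pseudo-reflection `s` has a root: a nonzero `α` with fixed hyperplane `αᗮ` and
`s x - x ∈ ℂ α`. A subspace is `s`-stable iff it contains `α` or is orthogonal to it, and `W`
permutes the roots. Hence, by irreducibility, every proper subspace `M` containing a root misses
some root that is not orthogonal to `M`: otherwise the roots inside `M` would span a proper
invariant subspace. Iterating gives linearly independent roots `α₀, …, α_{n-2}`, each
non-orthogonal to an earlier one. Let `v'` span the orthogonal complement of their span `M`.
The reflections of the `αᵢ` fix `v'`, so a subspace `U ≤ M` stable under `W₀` contains or is
orthogonal to each `αᵢ`, and the chain condition forces the same alternative for every `i`: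
either `M ≤ U` or `M ⊥ U`, i.e. `U = M` or `U = ⊥`.
-/

theorem Submodule.map_eq_self_of_mem_closure {K V : Type*} [Field K] [AddCommGroup V]
    [Module K V] [FiniteDimensional K V] {S : Set (V ≃ₗ[K] V)} {U : Submodule K V}
    (hS : ∀ s ∈ S, U.map (s : V →ₗ[K] V) ≤ U) {w : V ≃ₗ[K] V} (hw : w ∈ Subgroup.closure S) :
    U.map (w : V →ₗ[K] V) = U := by
  induction hw using Subgroup.closure_induction with
  | mem s hs => exact eq_of_le_of_finrank_eq (hS s hs) (LinearEquiv.finrank_map_eq s U)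
  | one => simp
  | mul x y _ _ hx hy =>
    rw [LinearEquiv.coe_toLinearMap_mul, Module.End.mul_eq_comp, Submodule.map_comp, hy, hx]
  | inv x _ hx => exact (Submodule.map_symm_eq_iff x).2 hx

section InnerProductSpace

open scoped InnerProductSpace

variable {𝕜 E : Type*} [RCLike 𝕜] [NormedAddCommGroup E] [InnerProductSpace 𝕜 E]

theorem Submodule.map_orthogonal_span_singleton_of_apply_eq {w : E ≃ₗ[𝕜] E}
    (hw : ∀ x y, ⟪w x, w y⟫_𝕜 = ⟪x, y⟫_𝕜) {v : E} (hv : w v = v) :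
    (𝕜 ∙ v)ᗮ.map (w : E →ₗ[𝕜] E) = (𝕜 ∙ v)ᗮ := by
  have := Submodule.map_orthogonal_equiv (𝕜 ∙ v) (w.isometryOfInner hw)
  simp only [LinearEquiv.isometryOfInner_toLinearEquiv] at this
  rw [this, Submodule.map_span, Set.image_singleton, LinearEquiv.coe_coe, hv]

theorem Submodule.exists_orthogonal_span_singleton_eq [FiniteDimensional 𝕜 E]
    {M : Submodule 𝕜 E} (hM : finrank 𝕜 M + 1 = finrank 𝕜 E) :
    ∃ v : E, v ≠ 0 ∧ (𝕜 ∙ v)ᗮ = M := by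
  have hrank : finrank 𝕜 Mᗮ = 1 := Submodule.finrank_add_finrank_orthogonal' hM
  obtain ⟨v, hv0, -⟩ := finrank_eq_one_iff'.1 hrank
  have hv : (v : E) ≠ 0 := by simpa using hv0
  refine ⟨v, hv, ?_⟩
  rw [← eq_span_singleton_of_mem_of_finrank_eq_one hrank v.2 hv, Submodule.orthogonal_orthogonal]

end InnerProductSpace

section Roots

variable {V : Type*} [NormedAddCommGroup V] [InnerProductSpace ℂ V]

def IsReflectionRoot (s : V ≃ₗ[ℂ] V) (α : V) : Prop :=
  α ≠ 0 ∧ (∀ x, ⟪α, x⟫ = 0 ↔ s x = x) ∧ ∀ x, ∃ c : ℂ, s x - x = c • α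

def IsRootOf (W : Subgroup (V ≃ₗ[ℂ] V)) (α : V) : Prop :=
  ∃ s ∈ W, IsReflectionRoot s α

theorem IsPseudoReflection.exists_isReflectionRoot [FiniteDimensional ℂ V] {s : V ≃ₗ[ℂ] V}
    (hs : IsPseudoReflection s) (hunit : ∀ x y, ⟪s x, s y⟫ = ⟪x, y⟫) :
    ∃ α, IsReflectionRoot s α := by
  obtain ⟨-, f, hf0, hker⟩ := hs
  set α := (InnerProductSpace.toDual ℂ V).symm (LinearMap.toContinuousLinearMap f)
  have hα : ∀ x, ⟪α, x⟫ = f x := fun x => InnerProductSpace.toDual_symm_apply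
  have hfix : ∀ x, ⟪α, x⟫ = 0 ↔ s x = x := fun x => by
    rw [hα, ← LinearMap.mem_ker, hker, LinearMap.mem_ker, LinearMap.sub_apply, sub_eq_zero]
    rfl
  refine ⟨α, fun h0 => hf0 (LinearMap.ext fun x => by simp [← hα, h0]), hfix, fun x => ?_⟩
  -- unitarity makes `s x - x` orthogonal to the fixed hyperplane `(ℂ ∙ α)ᗮ`
  have hperp : s x - x ∈ (ℂ ∙ α)ᗮᗮ := by
    refine (Submodule.mem_orthogonal' _ _).2 fun u hu => ?_
    have hsu : s u = u := (hfix u).1 (Submodule.mem_orthogonal_singleton_iff_inner_right.1 hu)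
    rw [inner_sub_left, ← hunit x u, hsu, sub_self]
  rw [Submodule.orthogonal_orthogonal] at hperp
  obtain ⟨c, hc⟩ := Submodule.mem_span_singleton.1 hperp
  exact ⟨c, hc.symm⟩

namespace IsReflectionRoot

variable {s : V ≃ₗ[ℂ] V} {α : V}

theorem ne_zero (h : IsReflectionRoot s α) : α ≠ 0 := h.1

theorem inner_eq_zero_iff (h : IsReflectionRoot s α) (x : V) : ⟪α, x⟫ = 0 ↔ s x = x := h.2.1 x

theorem exists_sub_eq_smul (h : IsReflectionRoot s α) (x : V) : ∃ c : ℂ, s x - x = c • α :=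
  h.2.2 x

theorem conj (h : IsReflectionRoot s α) {w : V ≃ₗ[ℂ] V} (hw : ∀ x y, ⟪w x, w y⟫ = ⟪x, y⟫) :
    IsReflectionRoot (w * s * w⁻¹) (w α) := by
  have hconj : ∀ y, (w * s * w⁻¹) (w y) = w (s y) := fun y => by simp
  refine ⟨by simpa using h.ne_zero, fun x => ?_, fun x => ?_⟩ <;> obtain ⟨y, rfl⟩ := w.surjective x
  · rw [hw, hconj, w.injective.eq_iff, h.inner_eq_zero_iff]
  · obtain ⟨c, hc⟩ := h.exists_sub_eq_smul y
    exact ⟨c, by rw [hconj, ← map_sub, hc, map_smul]⟩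

theorem map_le_iff (h : IsReflectionRoot s α) {U : Submodule ℂ V} :
    U.map (s : V →ₗ[ℂ] V) ≤ U ↔ α ∈ U ∨ α ∈ Uᗮ := by
  constructor
  · intro hU
    by_cases hfix : ∀ x ∈ U, s x = x
    · exact Or.inr ((Submodule.mem_orthogonal' U α).2 fun x hx =>
        (h.inner_eq_zero_iff x).2 (hfix x hx))
    · push Not at hfix
      obtain ⟨x, hxU, hsx⟩ := hfix
      obtain ⟨c, hc⟩ := h.exists_sub_eq_smul x
      have hc0 : c ≠ 0 := by
        rintro rfl
        exact hsx (sub_eq_zero.1 (hc.trans (zero_smul ℂ α)))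
      have hcα : c • α ∈ U := hc ▸ U.sub_mem (hU ⟨x, hxU, rfl⟩) hxU
      exact Or.inl ((U.smul_mem_iff hc0).1 hcα)
  · rintro hα _ ⟨x, hx, rfl⟩
    rcases hα with hα | hα
    · obtain ⟨c, hc⟩ := h.exists_sub_eq_smul x
      have hsx : s x = c • α + x := by rw [← hc, sub_add_cancel]
      change s x ∈ U
      rw [hsx]
      exact U.add_mem (U.smul_mem c hα) hx
    · change s x ∈ U
      rwa [(h.inner_eq_zero_iff x).1 (Submodule.inner_left_of_mem_orthogonal hx hα)]

end IsReflectionRoot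

theorem IsRootOf.ne_zero {W : Subgroup (V ≃ₗ[ℂ] V)} {α : V} (hα : IsRootOf W α) : α ≠ 0 :=
  let ⟨_, _, hs⟩ := hα
  hs.ne_zero

theorem IsRootOf.map {W : Subgroup (V ≃ₗ[ℂ] V)} (hinv : ∀ w ∈ W, ∀ x y : V, ⟪w x, w y⟫ = ⟪x, y⟫)
    {α : V} (hα : IsRootOf W α) {w : V ≃ₗ[ℂ] V} (hw : w ∈ W) : IsRootOf W (w α) := by
  obtain ⟨s, hsW, hs⟩ := hα
  exact ⟨w * s * w⁻¹, mul_mem (mul_mem hw hsW) (inv_mem hw), hs.conj (hinv w hw)⟩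

def IsConnectedChain {k : ℕ} (α : Fin k → V) : Prop :=
  ∀ i : Fin k, i.val ≠ 0 → ∃ j < i, ⟪α j, α i⟫ ≠ 0

namespace IsConnectedChain

variable {k : ℕ} {α : Fin k → V}

theorem snoc (h : IsConnectedChain α) {β : V} (hβ : ∃ j, ⟪α j, β⟫ ≠ 0) :
    IsConnectedChain (Fin.snoc α β : Fin (k + 1) → V) := by
  intro i hi
  induction i using Fin.lastCases with
  | last =>
    obtain ⟨j, hj⟩ := hβ
    exact ⟨j.castSucc, Fin.castSucc_lt_last j, by simpa using hj⟩
  | cast i =>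
    obtain ⟨j, hji, hj⟩ := h i (by simpa using hi)
    exact ⟨j.castSucc, Fin.castSucc_lt_castSucc_iff.2 hji, by simpa using hj⟩

theorem forall_of_step (h : IsConnectedChain α) {P : Fin k → Prop}
    (h0 : ∀ i : Fin k, i.val = 0 → P i) (hstep : ∀ i j, ⟪α j, α i⟫ ≠ 0 → P j → P i)
    (i : Fin k) : P i := by
  induction i using WellFoundedLT.induction with
  | ind i ih =>
    by_cases hi : i.val = 0
    · exact h0 i hi
    · obtain ⟨j, hji, hj⟩ := h i hi
      exact hstep i j hj (ih j hji)

theorem forall_mem_or_forall_mem_orthogonal (h : IsConnectedChain α) {U : Submodule ℂ V}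
    (hU : ∀ i, α i ∈ U ∨ α i ∈ Uᗮ) : (∀ i, α i ∈ U) ∨ ∀ i, α i ∈ Uᗮ := by
  by_cases h0 : ∀ i : Fin k, i.val = 0 → α i ∈ U
  · refine Or.inl (h.forall_of_step h0 fun i j hij hj => (hU i).resolve_right fun hi => ?_)
    exact hij (Submodule.inner_right_of_mem_orthogonal hj hi)
  · push Not at h0
    obtain ⟨i₀, hi₀, hi₀U⟩ := h0
    refine Or.inr (h.forall_of_step (fun i hi => ?_) fun i j hij hj => ?_)
    · exact Fin.ext (hi.trans hi₀.symm) ▸ (hU i₀).resolve_left hi₀U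
    · exact (hU i).resolve_left fun hi => hij (Submodule.inner_left_of_mem_orthogonal hi hj)

theorem eq_bot_or_eq_span (h : IsConnectedChain α) {s : Fin k → V ≃ₗ[ℂ] V}
    (hs : ∀ i, IsReflectionRoot (s i) (α i)) {U : Submodule ℂ V}
    (hUα : U ≤ Submodule.span ℂ (Set.range α)) (hU : ∀ i, U.map (s i : V →ₗ[ℂ] V) ≤ U) :
    U = ⊥ ∨ U = Submodule.span ℂ (Set.range α) := by
  rcases h.forall_mem_or_forall_mem_orthogonal fun i => (hs i).map_le_iff.1 (hU i) with
    hall | hall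
  · exact Or.inr (le_antisymm hUα (Submodule.span_le.2 (Set.range_subset_iff.2 hall)))
  · have hαU : Submodule.span ℂ (Set.range α) ≤ Uᗮ :=
      Submodule.span_le.2 (Set.range_subset_iff.2 hall)
    exact Or.inl ((Submodule.orthogonal_disjoint U).eq_bot_of_le (hUα.trans hαU))

end IsConnectedChain

section ReflectionGroup

variable [FiniteDimensional ℂ V] {W : Subgroup (V ≃ₗ[ℂ] V)}

theorem eq_bot_or_eq_top_of_forall_pseudoReflection
    (hgen : W = Subgroup.closure {s : V ≃ₗ[ℂ] V | s ∈ W ∧ IsPseudoReflection s})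
    (hirr : ∀ U : Submodule ℂ V,
      (∀ w ∈ W, Submodule.map (w : V →ₗ[ℂ] V) U ≤ U) → U = ⊥ ∨ U = ⊤)
    {U : Submodule ℂ V} (hU : ∀ s ∈ W, IsPseudoReflection s → U.map (s : V →ₗ[ℂ] V) ≤ U) :
    U = ⊥ ∨ U = ⊤ :=
  hirr U fun _ hw =>
    (Submodule.map_eq_self_of_mem_closure (fun s hs => hU s hs.1 hs.2) (hgen ▸ hw)).le

theorem exists_isRootOf
    (hgen : W = Subgroup.closure {s : V ≃ₗ[ℂ] V | s ∈ W ∧ IsPseudoReflection s})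
    (hinv : ∀ w ∈ W, ∀ x y : V, ⟪w x, w y⟫ = ⟪x, y⟫)
    (hirr : ∀ U : Submodule ℂ V,
      (∀ w ∈ W, Submodule.map (w : V →ₗ[ℂ] V) U ≤ U) → U = ⊥ ∨ U = ⊤)
    (hdim : 2 ≤ finrank ℂ V) : ∃ α, IsRootOf W α := by
  by_contra! hno
  obtain ⟨x, hx⟩ := Module.finrank_pos_iff_exists_ne_zero.1 (by omega : 0 < finrank ℂ V)
  -- without pseudo-reflections every line would be invariant
  have hline := eq_bot_or_eq_top_of_forall_pseudoReflection hgen hirr (U := ℂ ∙ x)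
    fun s hsW hs => by
      obtain ⟨α, hα⟩ := hs.exists_isReflectionRoot (hinv s hsW)
      exact (hno α ⟨s, hsW, hα⟩).elim
  rcases hline with h | h
  · exact hx (Submodule.span_singleton_eq_bot.1 h)
  · have := finrank_span_singleton (K := ℂ) hx
    rw [h, finrank_top] at this
    omega

theorem exists_isRootOf_notMem_notMem_orthogonal
    (hgen : W = Subgroup.closure {s : V ≃ₗ[ℂ] V | s ∈ W ∧ IsPseudoReflection s})
    (hinv : ∀ w ∈ W, ∀ x y : V, ⟪w x, w y⟫ = ⟪x, y⟫)
    (hirr : ∀ U : Submodule ℂ V,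
      (∀ w ∈ W, Submodule.map (w : V →ₗ[ℂ] V) U ≤ U) → U = ⊥ ∨ U = ⊤)
    {M : Submodule ℂ V} (hM : M ≠ ⊤) {α : V} (hα : IsRootOf W α) (hαM : α ∈ M) :
    ∃ β, IsRootOf W β ∧ β ∉ M ∧ β ∉ Mᗮ := by
  by_contra! hcon
  -- otherwise the roots lying in `M` span a nonzero proper invariant subspace
  set U := Submodule.span ℂ {β | IsRootOf W β ∧ β ∈ M}
  have hUM : U ≤ M := Submodule.span_le.2 fun β hβ => hβ.2
  have hαU : α ∈ U := Submodule.subset_span ⟨hα, hαM⟩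
  have hstab : ∀ s ∈ W, IsPseudoReflection s → U.map (s : V →ₗ[ℂ] V) ≤ U := by
    intro s hsW hs
    obtain ⟨β, hβ⟩ := hs.exists_isReflectionRoot (hinv s hsW)
    have hsM : M.map (s : V →ₗ[ℂ] V) ≤ M :=
      hβ.map_le_iff.2 (or_iff_not_imp_left.2 (hcon β ⟨s, hsW, hβ⟩))
    rw [Submodule.map_span_le]
    rintro γ ⟨hγ, hγM⟩
    exact Submodule.subset_span ⟨hγ.map hinv hsW, hsM ⟨γ, hγM, rfl⟩⟩
  rcases eq_bot_or_eq_top_of_forall_pseudoReflection hgen hirr hstab with hU | hU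
  · exact hα.ne_zero ((Submodule.mem_bot ℂ).1 (hU ▸ hαU))
  · exact hM (top_unique (hU ▸ hUM))

theorem exists_isConnectedChain_isRootOf
    (hgen : W = Subgroup.closure {s : V ≃ₗ[ℂ] V | s ∈ W ∧ IsPseudoReflection s})
    (hinv : ∀ w ∈ W, ∀ x y : V, ⟪w x, w y⟫ = ⟪x, y⟫)
    (hirr : ∀ U : Submodule ℂ V,
      (∀ w ∈ W, Submodule.map (w : V →ₗ[ℂ] V) U ≤ U) → U = ⊥ ∨ U = ⊤)
    (hdim : 2 ≤ finrank ℂ V) {k : ℕ} (hk : 1 ≤ k) (hkV : k ≤ finrank ℂ V) :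
    ∃ α : Fin k → V, (∀ i, IsRootOf W (α i)) ∧ LinearIndependent ℂ α ∧ IsConnectedChain α := by
  induction k, hk using Nat.le_induction with
  | base =>
    obtain ⟨α, hα⟩ := exists_isRootOf hgen hinv hirr hdim
    exact ⟨fun _ => α, fun _ => hα, linearIndependent_unique_iff.2 hα.ne_zero,
      fun i hi => absurd (Fin.val_eq_zero i) hi⟩
  | succ k hk ih =>
    obtain ⟨α, hroot, hli, hchain⟩ := ih (by omega)
    set M := Submodule.span ℂ (Set.range α)
    have hrank : finrank ℂ M = k := by rw [finrank_span_eq_card hli, Fintype.card_fin]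
    have hM : M ≠ ⊤ := fun h => by
      rw [h, finrank_top] at hrank
      omega
    obtain ⟨β, hβ, hβM, hβM'⟩ := exists_isRootOf_notMem_notMem_orthogonal hgen hinv hirr hM
      (hroot ⟨0, by omega⟩) (Submodule.subset_span (Set.mem_range_self _))
    have hlink : ∃ j, ⟪α j, β⟫ ≠ 0 := by
      by_contra! hall
      refine hβM' ((Submodule.mem_orthogonal M β).2 fun u hu => ?_)
      have hMβ : M ≤ (ℂ ∙ β)ᗮ := Submodule.span_le.2 (Set.range_subset_iff.2 fun j =>
        Submodule.mem_orthogonal_singleton_iff_inner_left.2 (hall j))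
      exact Submodule.mem_orthogonal_singleton_iff_inner_left.1 (hMβ hu)
    refine ⟨Fin.snoc α β, fun i => ?_, linearIndependent_finSnoc.2 ⟨hli, hβM⟩,
      hchain.snoc hlink⟩
    induction i using Fin.lastCases with
    | last => simpa using hβ
    | cast i => simpa using hroot i

end ReflectionGroup

end Roots

theorem stmt_7_general {V : Type*} [NormedAddCommGroup V] [InnerProductSpace ℂ V]
    [FiniteDimensional ℂ V]
    (W : Subgroup (V ≃ₗ[ℂ] V))
    (hgen : W = Subgroup.closure {s : V ≃ₗ[ℂ] V | s ∈ W ∧ IsPseudoReflection s})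
    (hinv : ∀ w ∈ W, ∀ x y : V, ⟪w x, w y⟫ = ⟪x, y⟫)
    (hdim : 2 ≤ finrank ℂ V)
    (hirr : ∀ U : Submodule ℂ V,
      (∀ w ∈ W, Submodule.map (w : V →ₗ[ℂ] V) U ≤ U) → U = ⊥ ∨ U = ⊤) :
    ∃ v' : V, v' ≠ 0 ∧
      (∀ w ∈ W, w v' = v' →
        Submodule.map (w : V →ₗ[ℂ] V) ((ℂ ∙ v')ᗮ) = (ℂ ∙ v')ᗮ) ∧
      finrank ℂ ((ℂ ∙ v')ᗮ : Submodule ℂ V) = finrank ℂ V - 1 ∧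
      (∀ U : Submodule ℂ V, U ≤ (ℂ ∙ v')ᗮ →
        (∀ w ∈ W, w v' = v' → Submodule.map (w : V →ₗ[ℂ] V) U ≤ U) →
        U = ⊥ ∨ U = (ℂ ∙ v')ᗮ) := by
  obtain ⟨α, hroot, hli, hchain⟩ :=
    exists_isConnectedChain_isRootOf hgen hinv hirr hdim (k := finrank ℂ V - 1) (by omega)
      (by omega)
  have hrank : finrank ℂ (Submodule.span ℂ (Set.range α)) = finrank ℂ V - 1 := by
    rw [finrank_span_eq_card hli, Fintype.card_fin]
  obtain ⟨v', hv', hspan⟩ := Submodule.exists_orthogonal_span_singleton_eq (by omega :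
    finrank ℂ (Submodule.span ℂ (Set.range α)) + 1 = finrank ℂ V)
  choose s hsW hs using hroot
  have hfix : ∀ i, s i v' = v' := fun i =>
    ((hs i).inner_eq_zero_iff v').1 (Submodule.mem_orthogonal_singleton_iff_inner_left.1
      (hspan ▸ Submodule.subset_span ⟨i, rfl⟩))
  refine ⟨v', hv', fun w hw hwv =>
    Submodule.map_orthogonal_span_singleton_of_apply_eq (hinv w hw) hwv, hspan ▸ hrank,
    fun U hUv' hU => ?_⟩
  rw [hspan] at hUv' ⊢
  exact hchain.eq_bot_or_eq_span hs hUv' fun i => hU (s i) (hsW i) (hfix i)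

/-- An irreducible finite pseudo-reflection group `W` on `V` of dimension
`n ≥ 2` (preserving a hermitian inner product) has an irreducible parabolic subgroup of rank
`n - 1`: there is a nonzero `v' ∈ V` whose pointwise stabilizer `W₀ = {w ∈ W | w v' = v'}`
stabilizes the `(n-1)`-dimensional orthogonal complement `(ℂ v')ᗮ` and acts irreducibly on
it. -/
theorem stmt_7 {V : Type*} [NormedAddCommGroup V] [InnerProductSpace ℂ V]
    [FiniteDimensional ℂ V] [Nontrivial V]
    (W : Subgroup (V ≃ₗ[ℂ] V)) (hfin : (W : Set (V ≃ₗ[ℂ] V)).Finite)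
    (hgen : W = Subgroup.closure {s : V ≃ₗ[ℂ] V | s ∈ W ∧ IsPseudoReflection s})
    (hinv : ∀ w ∈ W, ∀ x y : V, ⟪w x, w y⟫ = ⟪x, y⟫)
    (hdim : 2 ≤ finrank ℂ V)
    (hirr : ∀ U : Submodule ℂ V,
      (∀ w ∈ W, Submodule.map (w : V →ₗ[ℂ] V) U ≤ U) → U = ⊥ ∨ U = ⊤) :
    ∃ v' : V, v' ≠ 0 ∧
      (∀ w ∈ W, w v' = v' →
        Submodule.map (w : V →ₗ[ℂ] V) ((ℂ ∙ v')ᗮ) = (ℂ ∙ v')ᗮ) ∧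
      finrank ℂ ((ℂ ∙ v')ᗮ : Submodule ℂ V) = finrank ℂ V - 1 ∧
      (∀ U : Submodule ℂ V, U ≤ (ℂ ∙ v')ᗮ →
        (∀ w ∈ W, w v' = v' → Submodule.map (w : V →ₗ[ℂ] V) U ≤ U) →
        U = ⊥ ∨ U = (ℂ ∙ v')ᗮ) :=
  stmt_7_general W hgen hinv hdim hirr
end

section
/- Let V be a finite-dimensional complex vector space, 𝒜 a finite essential collection of hyperplanes in V, and for each H ∈ 𝒜 let α_H ∈ V* be a linear form with kernel H. Suppose 𝒜 is reducible, i.e., there is a decomposition V = V₁ ⊕ V₂ with V₁ ≠ 0 and V₂ ≠ 0 such that every H ∈ 𝒜 contains V₁ or contains V₂. Then the quadratic forms α_H² (H ∈ 𝒜) do not span the space of all quadratic forms on V; in particular, for any nonzero linear forms φ₁ vanishing on V₂ and φ₂ vanishing on V₁, the quadratic form φ₁·φ₂ is not a linear combination of the α_H². -/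
/-!
Evaluating the polar form at a pair `(a, d)` is a linear functional on quadratic forms. Take
`a ∈ V₁` with `φ₁ a ≠ 0` and `d ∈ V₂` with `φ₂ d ≠ 0`. Every `α_H` kills `a` or `d`, so the
functional kills every `α_H²`, whose polar form at `(a, d)` is `2 α_H(a) α_H(d)`; but on
`φ₁ φ₂` it takes the value `φ₁(a) φ₂(d) ≠ 0`.
-/

namespace QuadraticMap

variable {R M : Type*} [CommRing R] [AddCommGroup M] [Module R M]

def polarEval {N : Type*} [AddCommGroup N] [Module R N] (x y : M) :
    QuadraticMap R M N →ₗ[R] N where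
  toFun Q := polar Q x y
  map_add' Q Q' := polar_add Q Q' x y
  map_smul' c Q := polar_smul Q c x y

theorem polar_linMulLin (f g : M →ₗ[R] R) (x y : M) :
    polar (linMulLin f g) x y = f x * g y + f y * g x := by
  simp only [polar, linMulLin_apply, map_add]
  ring

theorem linMulLin_notMem_span_linMulLin_self {ι : Type*} (α : ι → M →ₗ[R] R) (s : Set ι)
    {x y : M} (hs : ∀ i ∈ s, α i x = 0 ∨ α i y = 0) {f g : M →ₗ[R] R}
    (hfg : f x * g y + f y * g x ≠ 0) :
    linMulLin f g ∉ Submodule.span R {Q | ∃ i ∈ s, Q = linMulLin (α i) (α i)} := by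
  have hspan : Submodule.span R {Q | ∃ i ∈ s, Q = linMulLin (α i) (α i)} ≤
      LinearMap.ker (polarEval x y) := by
    rw [Submodule.span_le]
    rintro _ ⟨i, hi, rfl⟩
    change polar (linMulLin (α i) (α i)) x y = 0
    rcases hs i hi with h | h <;> simp [polar_linMulLin, h]
  exact fun hmem => hfg (by simpa [polarEval, polar_linMulLin] using hspan hmem)

end QuadraticMap

theorem Codisjoint.exists_mem_apply_ne_zero {R M N : Type*} [Semiring R] [AddCommMonoid M]
    [Module R M] [AddCommMonoid N] [Module R N] {p q : Submodule R M} (h : Codisjoint p q)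
    {f : M →ₗ[R] N} (hf : f ≠ 0) (hq : q ≤ LinearMap.ker f) : ∃ x ∈ p, f x ≠ 0 := by
  by_contra! hp
  exact hf <| LinearMap.ker_eq_top.mp <| top_le_iff.mp <| h.top_le.trans <| sup_le hp hq

theorem stmt_8_general {V : Type*} [AddCommGroup V] [Module ℂ V]
    (𝒜 : Set (Submodule ℂ V))
    (α : Submodule ℂ V → (V →ₗ[ℂ] ℂ))
    (hα : ∀ H ∈ 𝒜, LinearMap.ker (α H) = H)
    (V₁ V₂ : Submodule ℂ V) (hcompl : IsCompl V₁ V₂)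
    (hred : ∀ H ∈ 𝒜, V₁ ≤ H ∨ V₂ ≤ H)
    (φ₁ φ₂ : V →ₗ[ℂ] ℂ) (hφ₁ : φ₁ ≠ 0) (hφ₂ : φ₂ ≠ 0)
    (hφ₁V₂ : V₂ ≤ LinearMap.ker φ₁) (hφ₂V₁ : V₁ ≤ LinearMap.ker φ₂) :
    Submodule.span ℂ
        {Q : QuadraticForm ℂ V | ∃ H ∈ 𝒜, Q = QuadraticMap.linMulLin (α H) (α H)} ≠ ⊤ ∧
    QuadraticMap.linMulLin φ₁ φ₂ ∉ Submodule.span ℂ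
        {Q : QuadraticForm ℂ V | ∃ H ∈ 𝒜, Q = QuadraticMap.linMulLin (α H) (α H)} := by
  obtain ⟨a, ha, ha₁⟩ := hcompl.codisjoint.exists_mem_apply_ne_zero hφ₁ hφ₁V₂
  obtain ⟨d, hd, hd₂⟩ := hcompl.codisjoint.symm.exists_mem_apply_ne_zero hφ₂ hφ₂V₁
  have hvanish : ∀ H ∈ 𝒜, α H a = 0 ∨ α H d = 0 := by
    intro H hH
    simp only [← LinearMap.mem_ker, hα H hH]
    exact (hred H hH).imp (· ha) (· hd)
  have hpolar : φ₁ a * φ₂ d + φ₁ d * φ₂ a ≠ 0 := by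
    rw [LinearMap.mem_ker.mp (hφ₁V₂ hd), LinearMap.mem_ker.mp (hφ₂V₁ ha)]
    simpa using mul_ne_zero ha₁ hd₂
  have hnotMem := QuadraticMap.linMulLin_notMem_span_linMulLin_self α 𝒜 hvanish hpolar
  exact ⟨fun htop => hnotMem (htop ▸ Submodule.mem_top), hnotMem⟩

/-- If a finite essential hyperplane arrangement `𝒜` in `V` is reducible
(there is `V = V₁ ⊕ V₂` with both summands nonzero such that each `H ∈ 𝒜` contains `V₁` or
`V₂`), then the squares `α_H²` of defining linear forms do not span the quadratic forms on
`V`; in particular for nonzero linear forms `φ₁` vanishing on `V₂` and `φ₂` vanishing on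
`V₁`, the quadratic form `φ₁·φ₂` is not a linear combination of the `α_H²`. -/
theorem stmt_8 {V : Type*} [AddCommGroup V] [Module ℂ V] [FiniteDimensional ℂ V]
    (𝒜 : Set (Submodule ℂ V)) (hfin : 𝒜.Finite)
    (hhyp : ∀ H ∈ 𝒜, ∃ f : V →ₗ[ℂ] ℂ, f ≠ 0 ∧ LinearMap.ker f = H)
    (hess : sInf 𝒜 = (⊥ : Submodule ℂ V))
    (α : Submodule ℂ V → (V →ₗ[ℂ] ℂ))
    (hα : ∀ H ∈ 𝒜, LinearMap.ker (α H) = H)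
    (V₁ V₂ : Submodule ℂ V) (hV₁ : V₁ ≠ ⊥) (hV₂ : V₂ ≠ ⊥) (hcompl : IsCompl V₁ V₂)
    (hred : ∀ H ∈ 𝒜, V₁ ≤ H ∨ V₂ ≤ H)
    (φ₁ φ₂ : V →ₗ[ℂ] ℂ) (hφ₁ : φ₁ ≠ 0) (hφ₂ : φ₂ ≠ 0)
    (hφ₁V₂ : V₂ ≤ LinearMap.ker φ₁) (hφ₂V₁ : V₁ ≤ LinearMap.ker φ₂) :
    Submodule.span ℂ
        {Q : QuadraticForm ℂ V | ∃ H ∈ 𝒜, Q = QuadraticMap.linMulLin (α H) (α H)} ≠ ⊤ ∧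
    QuadraticMap.linMulLin φ₁ φ₂ ∉ Submodule.span ℂ
        {Q : QuadraticForm ℂ V | ∃ H ∈ 𝒜, Q = QuadraticMap.linMulLin (α H) (α H)} :=
  stmt_8_general 𝒜 α hα V₁ V₂ hcompl hred φ₁ φ₂ hφ₁ hφ₂ hφ₁V₂ hφ₂V₁
end

section
/- Let W ⊆ GL(V) be a finite group generated by pseudo-reflections whose reflection arrangement 𝒜 is essential, and for each H ∈ 𝒜 let α_H ∈ V* be a linear form with kernel H. Then the quadratic forms α_H² (H ∈ 𝒜) span the space of all quadratic forms on V if and only if W acts irreducibly on V. -/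
open Module

/-!
Since the `α_H` span the dual space (essentiality), the squares `α_H²` span all quadratic forms
as soon as every product `α_H α_K` lies in their span.

If `U` is a proper nonzero invariant subspace, Maschke's theorem gives an invariant complement
`U'`. An invariant subspace either lies in the hyperplane of a reflection `s x = x + α_H x • e` or
contains its root `e`, and `e` cannot lie in both `U` and `U'`; so each `α_H` vanishes on `U` or
on `U'`, and `Q ↦ polar Q u z` (`u ∈ U`, `z ∈ U'`) kills every `α_H²` but not every quadratic
form.

Conversely, the span of the squares is invariant, and applying a reflection
`t x = x + α_L x • e` to `α_H α_K` shows that `α_H α_K` in the span forces `α_L α_K` in the span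
as soon as `α_H e ≠ 0`. The hyperplanes `H` with `α_H α_K` in the span form a set `C ∋ K` whose
intersection is moved into itself by every reflection, hence is `0` by irreducibility; every root
then leaves some `H ∈ C`, so `C` is the whole arrangement.
-/

open LinearMap

section Field

variable {K V : Type*} [Field K] [AddCommGroup V] [Module K V]

theorem LinearMap.exists_eq_smulRight_of_ker_le {M : Type*} [AddCommGroup M] [Module K M]
    {f : V →ₗ[K] K} (hf : f ≠ 0) {g : V →ₗ[K] M} (h : ker f ≤ ker g) :
    ∃ e : M, g = f.smulRight e := by
  obtain ⟨y, hy⟩ : ∃ y, f y ≠ 0 := by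
    by_contra! h
    exact hf (LinearMap.ext h)
  set x₀ := (f y)⁻¹ • y
  have hx₀ : f x₀ = 1 := by simp [x₀, hy]
  refine ⟨g x₀, LinearMap.ext fun x => ?_⟩
  have : x - f x • x₀ ∈ ker g := h (by simp [hx₀])
  simpa [sub_eq_zero] using this

theorem ker_conj_sub_id (s w : V ≃ₗ[K] V) :
    ker (((w⁻¹ * s * w : V ≃ₗ[K] V) : V →ₗ[K] V) - LinearMap.id) =
      (ker ((s : V →ₗ[K] V) - LinearMap.id)).comap (w : V →ₗ[K] V) := by
  have : ((w⁻¹ * s * w : V ≃ₗ[K] V) : V →ₗ[K] V) - LinearMap.id =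
      (w.symm : V →ₗ[K] V) ∘ₗ ((s : V →ₗ[K] V) - LinearMap.id) ∘ₗ (w : V →ₗ[K] V) := by
    ext x
    simp [LinearEquiv.coe_inv]
  rw [this, LinearEquiv.ker_comp, ker_comp]

theorem Submodule.map_eq_of_mem_closure [FiniteDimensional K V] {G : Set (V ≃ₗ[K] V)}
    {U : Submodule K V} (hG : ∀ g ∈ G, U.map (g : V →ₗ[K] V) ≤ U) {w : V ≃ₗ[K] V}
    (hw : w ∈ Subgroup.closure G) : U.map (w : V →ₗ[K] V) = U := by
  induction hw using Subgroup.closure_induction with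
  | mem g hg => exact Submodule.eq_of_le_of_finrank_eq (hG g hg) (LinearEquiv.finrank_map_eq g U)
  | one => simp
  | mul a b _ _ ha hb =>
    rw [LinearEquiv.coe_toLinearMap_mul, Module.End.mul_eq_comp, Submodule.map_comp, hb, ha]
  | inv a _ ha =>
    conv_lhs => rw [← ha]
    rw [← Submodule.map_comp, ← Module.End.mul_eq_comp, ← LinearEquiv.coe_toLinearMap_mul,
      inv_mul_cancel, LinearEquiv.coe_toLinearMap_one, Submodule.map_id]

theorem QuadraticMap.comp_mem_span {M : Type*} [AddCommGroup M] [Module K M]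
    {s : Set (QuadraticMap K V M)} {f : V →ₗ[K] V} (hs : ∀ Q ∈ s, Q.comp f ∈ Submodule.span K s)
    {Q : QuadraticMap K V M} (hQ : Q ∈ Submodule.span K s) : Q.comp f ∈ Submodule.span K s := by
  induction hQ using Submodule.span_induction with
  | mem Q hQ => exact hs Q hQ
  | zero => exact zero_mem _
  | add Q Q' _ _ h h' => exact add_mem h h'
  | smul c Q _ h => exact Submodule.smul_mem _ c h

open QuadraticMap in
theorem linMulLin_mem_of_forall_comp_mem [NeZero (2 : K)] {S : Submodule K (QuadraticForm K V)}
    {t : V →ₗ[K] V} {a h g : V →ₗ[K] K} {e : V} (ht : ∀ x, t x = x + a x • e)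
    (hS : ∀ Q ∈ S, Q.comp t ∈ S) (ha : linMulLin a a ∈ S) (hh : linMulLin h h ∈ S)
    (he : h e ≠ 0) (hg : linMulLin h g ∈ S) : linMulLin a g ∈ S := by
  have hha : linMulLin h a ∈ S := by
    have key : (2 * h e) • linMulLin h a =
        (linMulLin h h).comp t - linMulLin h h - (h e * h e) • linMulLin a a := by
      ext x; simp [ht]; ring
    refine (Submodule.smul_mem_iff S (mul_ne_zero two_ne_zero he)).mp ?_
    rw [key]
    exact sub_mem (sub_mem (hS _ hh) hh) (S.smul_mem _ ha)
  have key : h e • linMulLin a g = (linMulLin h g).comp t - linMulLin h g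
      - g e • linMulLin h a - (h e * g e) • linMulLin a a := by
    ext x; simp [ht]; ring
  refine (Submodule.smul_mem_iff S he).mp ?_
  rw [key]
  exact sub_mem (sub_mem (sub_mem (hS _ hg) hg) (S.smul_mem _ hha)) (S.smul_mem _ ha)

open QuadraticMap TensorProduct in
theorem span_image2_linMulLin_eq_top [FiniteDimensional K V] {A : Set (V →ₗ[K] K)}
    (hA : Submodule.span K A = ⊤) :
    Submodule.span K (Set.image2 (linMulLin (R := K)) A A) = ⊤ := by
  let T : (V →ₗ[K] K) ⊗[K] (V →ₗ[K] K) →ₗ[K] QuadraticForm K V :=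
    BilinMap.toQuadraticMapLinearMap K K V ∘ₗ dualTensorHom K V (V →ₗ[K] K)
  have hT : Function.Surjective T :=
    BilinMap.toQuadraticMap_surjective.comp (dualTensorHomEquiv K V (V →ₗ[K] K)).surjective
  have hT_tmul : ∀ f g, T (f ⊗ₜ g) = linMulLin f g := fun f g => by ext; simp [T]
  calc Submodule.span K (Set.image2 (linMulLin (R := K)) A A)
      = Submodule.map₂ ((TensorProduct.mk K _ _).compr₂ T) (Submodule.span K A)
          (Submodule.span K A) := by
        simp only [Submodule.map₂_span_span, compr₂_apply, mk_apply, hT_tmul]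
    _ = Submodule.map T (Submodule.map₂ (TensorProduct.mk K _ _) ⊤ ⊤) := by
        rw [hA, Submodule.map_map₂]
    _ = ⊤ := by
        rw [TensorProduct.map₂_mk_top_top_eq_top, Submodule.map_top]
        exact range_eq_top.mpr hT

theorem exists_isCompl_invariant [CharZero K] {W : Subgroup (V ≃ₗ[K] V)}
    (hW : (W : Set (V ≃ₗ[K] V)).Finite) {U : Submodule K V}
    (hU : ∀ w ∈ W, U.map (w : V →ₗ[K] V) ≤ U) :
    ∃ U' : Submodule K V, IsCompl U U' ∧ ∀ w ∈ W, U'.map (w : V →ₗ[K] V) ≤ U' := by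
  have : Finite W := hW.to_subtype
  have : NeZero (Nat.card W : K) := ⟨Nat.cast_ne_zero.mpr Nat.card_pos.ne'⟩
  let ρ : Representation K W V :=
    (LinearEquiv.automorphismGroup.toLinearMapMonoidHom).comp W.subtype
  obtain ⟨σ, hσ⟩ := exists_isCompl
    (⟨U, fun w _ hv => hU w w.2 ⟨_, hv, rfl⟩⟩ : Subrepresentation ρ)
  refine ⟨σ.toSubmodule, ⟨?_, ?_⟩, fun w hw => ?_⟩
  · exact disjoint_iff.mpr (congrArg Subrepresentation.toSubmodule (disjoint_iff.mp hσ.disjoint))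
  · exact codisjoint_iff.mpr
      (congrArg Subrepresentation.toSubmodule (codisjoint_iff.mp hσ.codisjoint))
  · rintro _ ⟨v, hv, rfl⟩
    exact σ.apply_mem_toSubmodule ⟨w, hw⟩ hv

theorem Submodule.le_ker_or_mem_of_map_le {t : V →ₗ[K] V} {a : V →ₗ[K] K} {e : V}
    (ht : ∀ x, t x = x + a x • e) {U : Submodule K V} (hU : U.map t ≤ U) :
    U ≤ ker a ∨ e ∈ U := by
  by_contra! ⟨hle, he⟩
  obtain ⟨u, hu, hau⟩ := SetLike.not_le_iff_exists.mp hle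
  have : t u - u ∈ U := sub_mem (hU ⟨u, hu, rfl⟩) hu
  rw [ht, add_sub_cancel_left] at this
  exact he ((Submodule.smul_mem_iff U hau).mp this)

open QuadraticMap in
theorem span_ne_top_of_forall_eq_linMulLin_self {𝒬 : Set (QuadraticForm K V)}
    {U U' : Submodule K V} (hUU' : Disjoint U U') (hU : U ≠ ⊥) (hU' : U' ≠ ⊥)
    (h𝒬 : ∀ Q ∈ 𝒬, ∃ f : V →ₗ[K] K, (U ≤ ker f ∨ U' ≤ ker f) ∧ Q = linMulLin f f) :
    Submodule.span K 𝒬 ≠ ⊤ := by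
  obtain ⟨u, hu, hu0⟩ := U.ne_bot_iff.mp hU
  obtain ⟨z, hz, hz0⟩ := U'.ne_bot_iff.mp hU'
  have hpolar : ∀ Q ∈ Submodule.span K 𝒬, polar Q u z = 0 := by
    intro Q hQ
    induction hQ using Submodule.span_induction with
    | mem Q hQ =>
      obtain ⟨f, hf | hf, rfl⟩ := h𝒬 Q hQ
      · simp [QuadraticMap.polar, LinearMap.mem_ker.mp (hf hu)]
      · simp [QuadraticMap.polar, LinearMap.mem_ker.mp (hf hz)]
    | zero => simp [QuadraticMap.polar]
    | add Q Q' _ _ h h' => rw [FunLike.coe_add, QuadraticMap.polar_add, h, h', add_zero]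
    | smul c Q _ h => rw [FunLike.coe_smul, QuadraticMap.polar_smul, h, smul_zero]
  obtain ⟨l, hlu, hl⟩ := Submodule.exists_le_ker_of_notMem (p := U') (v := u)
    fun h => hu0 (Submodule.disjoint_def.mp hUU' u hu h)
  obtain ⟨m, hmz, hm⟩ := Submodule.exists_le_ker_of_notMem (p := U) (v := z)
    fun h => hz0 (Submodule.disjoint_def.mp hUU' z h hz)
  intro htop
  have := hpolar (linMulLin l m) (htop ▸ Submodule.mem_top)
  simp [QuadraticMap.polar, LinearMap.mem_ker.mp (hl hz), LinearMap.mem_ker.mp (hm hu)] at this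
  exact this.elim hlu hmz

end Field

namespace IsPseudoReflection

variable {V : Type*} [AddCommGroup V] [Module ℂ V] {s : V ≃ₗ[ℂ] V}

theorem ker_sub_id_ne_top (hs : IsPseudoReflection s) :
    ker ((s : V →ₗ[ℂ] V) - LinearMap.id) ≠ ⊤ := by
  obtain ⟨-, f, hf0, hfk⟩ := hs
  rw [← hfk]
  exact fun h => hf0 (LinearMap.ker_eq_top.mp h)

theorem exists_root (hs : IsPseudoReflection s) {β : V →ₗ[ℂ] ℂ}
    (hβ : ker β = ker ((s : V →ₗ[ℂ] V) - LinearMap.id)) :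
    ∃ e ≠ 0, ∀ x, s x = x + β x • e := by
  have hβ0 : β ≠ 0 := by
    rintro rfl
    exact hs.ker_sub_id_ne_top (by rw [← hβ, ker_zero])
  obtain ⟨e, he⟩ := exists_eq_smulRight_of_ker_le hβ0 hβ.le
  refine ⟨e, ?_, fun x => ?_⟩
  · rintro rfl
    exact hs.ker_sub_id_ne_top (by rw [he]; simp)
  · have := congr($he x)
    simp only [LinearMap.sub_apply, LinearEquiv.coe_coe, id_apply, smulRight_apply] at this
    rw [← this, add_sub_cancel]

theorem conj (hs : IsPseudoReflection s) (w : V ≃ₗ[ℂ] V) : IsPseudoReflection (w⁻¹ * s * w) := by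
  obtain ⟨hord, f, hf0, hfk⟩ := hs
  refine ⟨IsConj.isOfFinOrder (isConj_iff.mpr ⟨w⁻¹, by rw [inv_inv]⟩) hord,
    f ∘ₗ (w : V →ₗ[ℂ] V), fun h => hf0 (LinearMap.ext fun x => ?_), ?_⟩
  · simpa using congr($h (w.symm x))
  · rw [ker_comp, hfk, ker_conj_sub_id]

theorem le_ker_or_le_ker (hs : IsPseudoReflection s) {β : V →ₗ[ℂ] ℂ}
    (hβ : ker β = ker ((s : V →ₗ[ℂ] V) - LinearMap.id)) {U U' : Submodule ℂ V}
    (hUU' : Disjoint U U') (hU : U.map (s : V →ₗ[ℂ] V) ≤ U)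
    (hU' : U'.map (s : V →ₗ[ℂ] V) ≤ U') : U ≤ ker β ∨ U' ≤ ker β := by
  obtain ⟨e, he0, he⟩ := hs.exists_root hβ
  rcases Submodule.le_ker_or_mem_of_map_le he hU with h | heU
  · exact Or.inl h
  rcases Submodule.le_ker_or_mem_of_map_le he hU' with h | heU'
  · exact Or.inr h
  exact absurd (Submodule.disjoint_def.mp hUU' e heU heU') he0

end IsPseudoReflection

section Arrangement

variable {V : Type*} [AddCommGroup V] [Module ℂ V] {W : Subgroup (V ≃ₗ[ℂ] V)}

theorem ne_top_of_mem_reflArrangement {H : Submodule ℂ V} (hH : H ∈ reflArrangement W) :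
    H ≠ ⊤ := by
  obtain ⟨s, -, hs, rfl⟩ := hH
  exact hs.ker_sub_id_ne_top

theorem comap_mem_reflArrangement {H : Submodule ℂ V} (hH : H ∈ reflArrangement W)
    {w : V ≃ₗ[ℂ] V} (hw : w ∈ W) : H.comap (w : V →ₗ[ℂ] V) ∈ reflArrangement W := by
  obtain ⟨s, hsW, hs, rfl⟩ := hH
  exact ⟨w⁻¹ * s * w, mul_mem (mul_mem (inv_mem hw) hsW) hw, hs.conj w, ker_conj_sub_id s w⟩

theorem reflArrangement_subset_of_closed [FiniteDimensional ℂ V]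
    (hgen : W = Subgroup.closure {s : V ≃ₗ[ℂ] V | s ∈ W ∧ IsPseudoReflection s})
    (hirr : ∀ U : Submodule ℂ V,
      (∀ w ∈ W, Submodule.map (w : V →ₗ[ℂ] V) U ≤ U) → U = ⊥ ∨ U = ⊤)
    {C : Set (Submodule ℂ V)} (hC : C ⊆ reflArrangement W) (hne : C.Nonempty)
    (hclosed : ∀ t ∈ W, IsPseudoReflection t → ∀ H ∈ C, ∀ x, t x - x ∉ H →
      ker ((t : V →ₗ[ℂ] V) - LinearMap.id) ∈ C) :
    reflArrangement W ⊆ C := by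
  have hmove : ∀ t ∈ W, IsPseudoReflection t → ∀ v ∈ sInf C, t v - v ∈ sInf C := by
    intro t ht hs v hv
    refine Submodule.mem_sInf.mpr fun H hH => ?_
    by_cases hL : ker ((t : V →ₗ[ℂ] V) - LinearMap.id) ∈ C
    · have : t v - v = 0 := Submodule.mem_sInf.mp hv _ hL
      rw [this]
      exact zero_mem H
    · by_contra hx
      exact hL (hclosed t ht hs H hH v hx)
  have hstable : ∀ w ∈ W, (sInf C).map (w : V →ₗ[ℂ] V) ≤ sInf C := by
    intro w hw
    refine (Submodule.map_eq_of_mem_closure ?_ (hgen ▸ hw)).le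
    rintro t ⟨ht, hs⟩ _ ⟨v, hv, rfl⟩
    simpa using add_mem (hmove t ht hs v hv) hv
  have hbot : sInf C = ⊥ := (hirr _ hstable).resolve_right fun htop => by
    obtain ⟨H, hH⟩ := hne
    exact ne_top_of_mem_reflArrangement (hC hH) (top_le_iff.mp (htop ▸ sInf_le hH))
  rintro _ ⟨t, ht, hs, rfl⟩
  obtain ⟨x, hx⟩ := SetLike.exists_not_mem_of_ne_top _ hs.ker_sub_id_ne_top rfl
  have hx' : t x - x ∉ sInf C := by
    rw [hbot, Submodule.mem_bot]
    simpa [sub_eq_zero] using hx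
  obtain ⟨H, hH, hxH⟩ : ∃ H ∈ C, t x - x ∉ H := by simpa [Submodule.mem_sInf] using hx'
  exact hclosed t ht hs H hH x hxH

end Arrangement

section SquareSpan

open QuadraticMap

variable {V : Type*} [AddCommGroup V] [Module ℂ V] {W : Subgroup (V ≃ₗ[ℂ] V)}
  {α : Submodule ℂ V → (V →ₗ[ℂ] ℂ)}

variable (W α) in
def squareSpan : Submodule ℂ (QuadraticForm ℂ V) :=
  Submodule.span ℂ {Q | ∃ H ∈ reflArrangement W, Q = linMulLin (α H) (α H)}

theorem linMulLin_self_mem_squareSpan {H : Submodule ℂ V} (hH : H ∈ reflArrangement W) :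
    linMulLin (α H) (α H) ∈ squareSpan W α :=
  Submodule.subset_span ⟨H, hH, rfl⟩

theorem comp_mem_squareSpan (hα : ∀ H ∈ reflArrangement W, ker (α H) = H) {w : V ≃ₗ[ℂ] V}
    (hw : w ∈ W) {Q : QuadraticForm ℂ V} (hQ : Q ∈ squareSpan W α) :
    Q.comp (w : V →ₗ[ℂ] V) ∈ squareSpan W α := by
  refine comp_mem_span (fun Q hQ => ?_) hQ
  obtain ⟨H, hH, rfl⟩ := hQ
  set H' := H.comap (w : V →ₗ[ℂ] V)
  have hH' : H' ∈ reflArrangement W := comap_mem_reflArrangement hH hw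
  have hne : α H' ≠ 0 := fun h =>
    ne_top_of_mem_reflArrangement hH' (by rw [← hα _ hH', h, ker_zero])
  obtain ⟨c, hc⟩ := exists_eq_smulRight_of_ker_le hne
    (g := α H ∘ₗ (w : V →ₗ[ℂ] V)) (by rw [hα _ hH', ker_comp, hα H hH])
  have : (linMulLin (α H) (α H)).comp (w : V →ₗ[ℂ] V) = (c * c) • linMulLin (α H') (α H') := by
    ext x
    have := congr($hc x)
    simp only [LinearMap.comp_apply, LinearEquiv.coe_coe, smulRight_apply, smul_eq_mul] at this
    simp [this]
    ring
  rw [this]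
  exact Submodule.smul_mem _ _ (linMulLin_self_mem_squareSpan hH')

theorem linMulLin_mem_squareSpan [FiniteDimensional ℂ V]
    (hgen : W = Subgroup.closure {s : V ≃ₗ[ℂ] V | s ∈ W ∧ IsPseudoReflection s})
    (hirr : ∀ U : Submodule ℂ V,
      (∀ w ∈ W, Submodule.map (w : V →ₗ[ℂ] V) U ≤ U) → U = ⊥ ∨ U = ⊤)
    (hα : ∀ H ∈ reflArrangement W, ker (α H) = H) {H K : Submodule ℂ V}
    (hH : H ∈ reflArrangement W) (hK : K ∈ reflArrangement W) :
    linMulLin (α H) (α K) ∈ squareSpan W α := by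
  let C := {M ∈ reflArrangement W | linMulLin (α M) (α K) ∈ squareSpan W α}
  suffices reflArrangement W ⊆ C from (this hH).2
  refine reflArrangement_subset_of_closed hgen hirr (fun _ h => h.1)
    ⟨K, hK, linMulLin_self_mem_squareSpan hK⟩ ?_
  rintro t ht hs M ⟨hM, hMK⟩ x hx
  have hL : ker ((t : V →ₗ[ℂ] V) - LinearMap.id) ∈ reflArrangement W := ⟨t, ht, hs, rfl⟩
  obtain ⟨e, -, he⟩ := hs.exists_root (hα _ hL)
  have heM : α M e ≠ 0 := fun h0 => hx <| by
    rw [← hα M hM, mem_ker, he x, add_sub_cancel_left, map_smul, h0, smul_zero]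
  exact ⟨hL, linMulLin_mem_of_forall_comp_mem (t := (t : V →ₗ[ℂ] V)) he
    (fun Q => comp_mem_squareSpan hα ht) (linMulLin_self_mem_squareSpan hL)
    (linMulLin_self_mem_squareSpan hM) heM hMK⟩

theorem span_image_reflArrangement_eq_top [FiniteDimensional ℂ V]
    (hess : sInf (reflArrangement W) = (⊥ : Submodule ℂ V))
    (hα : ∀ H ∈ reflArrangement W, ker (α H) = H) :
    Submodule.span ℂ (α '' reflArrangement W) = ⊤ := by
  refine Submodule.span_eq_top_of_ne_zero fun z hz => ?_
  have : z ∉ sInf (reflArrangement W) := by rwa [hess, Submodule.mem_bot]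
  obtain ⟨H, hH, hzH⟩ : ∃ H ∈ reflArrangement W, z ∉ H := by
    simpa [Submodule.mem_sInf] using this
  exact ⟨α H, ⟨H, hH, rfl⟩, by rwa [← hα H hH, mem_ker] at hzH⟩

theorem squareSpan_eq_top_of_irreducible [FiniteDimensional ℂ V]
    (hgen : W = Subgroup.closure {s : V ≃ₗ[ℂ] V | s ∈ W ∧ IsPseudoReflection s})
    (hess : sInf (reflArrangement W) = (⊥ : Submodule ℂ V))
    (hirr : ∀ U : Submodule ℂ V,
      (∀ w ∈ W, Submodule.map (w : V →ₗ[ℂ] V) U ≤ U) → U = ⊥ ∨ U = ⊤)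
    (hα : ∀ H ∈ reflArrangement W, ker (α H) = H) :
    squareSpan W α = ⊤ := by
  rw [eq_top_iff, ← span_image2_linMulLin_eq_top (span_image_reflArrangement_eq_top hess hα),
    squareSpan, Submodule.span_le]
  rintro _ ⟨_, ⟨H, hH, rfl⟩, _, ⟨K, hK, rfl⟩, rfl⟩
  exact linMulLin_mem_squareSpan hgen hirr hα hH hK

theorem squareSpan_ne_top_of_invariant (hfin : (W : Set (V ≃ₗ[ℂ] V)).Finite)
    (hα : ∀ H ∈ reflArrangement W, ker (α H) = H) {U : Submodule ℂ V}
    (hU : ∀ w ∈ W, U.map (w : V →ₗ[ℂ] V) ≤ U) (hbot : U ≠ ⊥) (htop : U ≠ ⊤) :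
    squareSpan W α ≠ ⊤ := by
  obtain ⟨U', hUU', hU'⟩ := exists_isCompl_invariant hfin hU
  refine span_ne_top_of_forall_eq_linMulLin_self hUU'.disjoint hbot
    (fun h => htop (eq_top_of_isCompl_bot (h ▸ hUU'))) ?_
  rintro _ ⟨H, ⟨s, hsW, hs, rfl⟩, rfl⟩
  exact ⟨_, hs.le_ker_or_le_ker (hα _ ⟨s, hsW, hs, rfl⟩) hUU'.disjoint (hU s hsW) (hU' s hsW),
    rfl⟩

end SquareSpan

theorem stmt_10_general {V : Type*} [AddCommGroup V] [Module ℂ V] [FiniteDimensional ℂ V]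
    (W : Subgroup (V ≃ₗ[ℂ] V)) (hfin : (W : Set (V ≃ₗ[ℂ] V)).Finite)
    (hgen : W = Subgroup.closure {s : V ≃ₗ[ℂ] V | s ∈ W ∧ IsPseudoReflection s})
    (hess : sInf (reflArrangement W) = (⊥ : Submodule ℂ V))
    (α : Submodule ℂ V → (V →ₗ[ℂ] ℂ))
    (hα : ∀ H ∈ reflArrangement W, LinearMap.ker (α H) = H) :
    Submodule.span ℂ
        {Q : QuadraticForm ℂ V |
          ∃ H ∈ reflArrangement W, Q = QuadraticMap.linMulLin (α H) (α H)} = ⊤ ↔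
      ∀ U : Submodule ℂ V,
        (∀ w ∈ W, Submodule.map (w : V →ₗ[ℂ] V) U ≤ U) → U = ⊥ ∨ U = ⊤ := by
  refine ⟨fun hspan U hU => ?_, fun hirr => squareSpan_eq_top_of_irreducible hgen hess hirr hα⟩
  by_contra! h
  exact squareSpan_ne_top_of_invariant hfin hα hU h.1 h.2 hspan

/-- For a finite pseudo-reflection group `W` with essential reflection
arrangement `𝒜` and `α_H` a linear form with kernel `H` for each `H ∈ 𝒜`, the
quadratic forms `α_H²` span the quadratic forms on `V` if and only if `W` acts
irreducibly on `V`. -/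
theorem stmt_10 {V : Type*} [AddCommGroup V] [Module ℂ V] [FiniteDimensional ℂ V] [Nontrivial V]
    (W : Subgroup (V ≃ₗ[ℂ] V)) (hfin : (W : Set (V ≃ₗ[ℂ] V)).Finite)
    (hgen : W = Subgroup.closure {s : V ≃ₗ[ℂ] V | s ∈ W ∧ IsPseudoReflection s})
    (hess : sInf (reflArrangement W) = (⊥ : Submodule ℂ V))
    (α : Submodule ℂ V → (V →ₗ[ℂ] ℂ))
    (hα : ∀ H ∈ reflArrangement W, LinearMap.ker (α H) = H) :
    Submodule.span ℂ
        {Q : QuadraticForm ℂ V |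
          ∃ H ∈ reflArrangement W, Q = QuadraticMap.linMulLin (α H) (α H)} = ⊤ ↔
      ∀ U : Submodule ℂ V,
        (∀ w ∈ W, Submodule.map (w : V →ₗ[ℂ] V) U ≤ U) → U = ⊥ ∨ U = ⊤ :=
  stmt_10_general W hfin hgen hess α hα
end

section
/- Let W ⊆ GL(V) be a finite group generated by pseudo-reflections acting irreducibly on V, with nonempty reflection arrangement 𝒜, and fix a W-invariant hermitian inner product on V; for each H ∈ 𝒜 let e_H be a nonzero vector spanning the orthogonal complement of H. Suppose n is a positive integer such that for all w ∈ W, H ∈ 𝒜 and ζ ∈ ℂ, w·e_H = ζ·e_H implies ζⁿ = 1. Then zⁿ = 1 for every z in the center Z(W). In particular, the exponent of Z(W) divides κ(W), and since Z(W) is cyclic for irreducible W, the order |Z(W)| divides κ(W). -/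
open scoped ComplexInnerProductSpace

namespace LinearEquiv

variable {K V : Type*} [Field K] [AddCommGroup V] [Module K V]

theorem exists_apply_eq_smul_of_commute_of_irreducible [IsAlgClosed K] [FiniteDimensional K V]
    [Nontrivial V] (S : Set (V ≃ₗ[K] V))
    (hirr : ∀ U : Submodule K V, (∀ w ∈ S, U.map (w : V →ₗ[K] V) ≤ U) → U = ⊥ ∨ U = ⊤)
    (z : V ≃ₗ[K] V) (hz : ∀ w ∈ S, w * z = z * w) :
    ∃ ζ : K, ∀ x, z x = ζ • x := by
  obtain ⟨ζ, hζ⟩ := Module.End.exists_eigenvalue (z : V →ₗ[K] V)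
  have hstable : ∀ w ∈ S, (Module.End.eigenspace (z : V →ₗ[K] V) ζ).map (w : V →ₗ[K] V) ≤
      Module.End.eigenspace (z : V →ₗ[K] V) ζ := by
    rintro w hw _ ⟨x, hx, rfl⟩
    have hcomm : Commute (z : V →ₗ[K] V) (w : V →ₗ[K] V) :=
      LinearMap.ext fun y => (LinearEquiv.congr_fun (hz w hw) y).symm
    exact Module.End.mapsTo_genEigenspace_of_comm hcomm ζ 1 hx
  have htop := (hirr _ hstable).resolve_left hζ
  refine ⟨ζ, fun x => ?_⟩
  have hx : x ∈ Module.End.eigenspace (z : V →ₗ[K] V) ζ := htop ▸ Submodule.mem_top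
  exact Module.End.mem_eigenspace_iff.1 hx

theorem pow_apply_of_forall_apply_eq_smul {z : V ≃ₗ[K] V} {ζ : K} (hz : ∀ x, z x = ζ • x)
    (n : ℕ) (x : V) : (z ^ n) x = ζ ^ n • x := by
  induction n with
  | zero => simp
  | succ n ih => rw [pow_succ, mul_apply, hz, map_smul, ih, smul_smul, pow_succ']

end LinearEquiv

theorem stmt_15_general {V : Type*} [NormedAddCommGroup V] [InnerProductSpace ℂ V]
    [FiniteDimensional ℂ V] [Nontrivial V]
    (W : Subgroup (V ≃ₗ[ℂ] V))
    (hirr : ∀ U : Submodule ℂ V,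
      (∀ w ∈ W, Submodule.map (w : V →ₗ[ℂ] V) U ≤ U) → U = ⊥ ∨ U = ⊤)
    (hne : (reflArrangement W).Nonempty)
    (e : Submodule ℂ V → V)
    (n : ℕ)
    (heig : ∀ w ∈ W, ∀ H ∈ reflArrangement W, ∀ ζ : ℂ, w (e H) = ζ • e H → ζ ^ n = 1) :
    ∀ z ∈ W, (∀ v ∈ W, v * z = z * v) → z ^ n = 1 := by
  intro z hz hcentral
  obtain ⟨ζ, hζ⟩ :=
    LinearEquiv.exists_apply_eq_smul_of_commute_of_irreducible (W : Set (V ≃ₗ[ℂ] V)) hirr z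
      hcentral
  obtain ⟨H, hH⟩ := hne
  have hζn : ζ ^ n = 1 := heig z hz H hH ζ (hζ (e H))
  ext x
  rw [LinearEquiv.pow_apply_of_forall_apply_eq_smul hζ, hζn, one_smul]
  rfl

/-- Let `W` be an irreducible finite pseudo-reflection group on `V`
(preserving a hermitian inner product) with nonempty reflection arrangement `𝒜`, and for
each `H ∈ 𝒜` let `e_H` span `Hᗮ`. If `n > 0` is such that `w e_H = ζ • e_H` always forces
`ζⁿ = 1`, then every central element `z` of `W` satisfies `zⁿ = 1`; in particular the
exponent of `Z(W)` (= its order, `Z(W)` being cyclic) divides `κ(W)`. -/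
theorem stmt_15 {V : Type*} [NormedAddCommGroup V] [InnerProductSpace ℂ V]
    [FiniteDimensional ℂ V] [Nontrivial V]
    (W : Subgroup (V ≃ₗ[ℂ] V)) (hfin : (W : Set (V ≃ₗ[ℂ] V)).Finite)
    (hgen : W = Subgroup.closure {s : V ≃ₗ[ℂ] V | s ∈ W ∧ IsPseudoReflection s})
    (hinv : ∀ w ∈ W, ∀ x y : V, ⟪w x, w y⟫ = ⟪x, y⟫)
    (hirr : ∀ U : Submodule ℂ V,
      (∀ w ∈ W, Submodule.map (w : V →ₗ[ℂ] V) U ≤ U) → U = ⊥ ∨ U = ⊤)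
    (hne : (reflArrangement W).Nonempty)
    (e : Submodule ℂ V → V)
    (he : ∀ H ∈ reflArrangement W, e H ≠ 0 ∧ (ℂ ∙ e H) = Hᗮ)
    (n : ℕ) (hn : 0 < n)
    (heig : ∀ w ∈ W, ∀ H ∈ reflArrangement W, ∀ ζ : ℂ, w (e H) = ζ • e H → ζ ^ n = 1) :
    ∀ z ∈ W, (∀ v ∈ W, v * z = z * v) → z ^ n = 1 :=
  stmt_15_general W hirr hne e n heig
end

section
/- Let d, e, r be positive integers with r ≥ 3, and let W = G(de,e,r) ⊆ GL_r(ℂ) be the group of r × r monomial matrices whose nonzero entries are de-th roots of unity and whose product of nonzero entries is a d-th root of unity. Then for every μ ∈ ℂ with μ^{de} = 1 there exist w ∈ W, indices i ≠ j, and ζ ∈ ℂ with ζ^{de} = 1, such that w·(e_i − ζ·e_j) = μ·(e_i − ζ·e_j). (Together with the eigenvalue bound, this shows κ(G(de,e,r)) = de for r ≥ 3.) -/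
/-- Membership in the imprimitive reflection group `G(de,e,r) ⊆ GL_r(ℂ)`: `w` is a monomial
matrix, `w e_i = λ_i • e_{σ(i)}`, whose nonzero entries `λ_i` are `de`-th roots of unity and
whose product of nonzero entries is a `d`-th root of unity. -/
def MemG (d e r : ℕ) (w : (Fin r → ℂ) ≃ₗ[ℂ] (Fin r → ℂ)) : Prop :=
  ∃ (σ : Equiv.Perm (Fin r)) (lam : Fin r → ℂ),
    (∀ i, lam i ^ (d * e) = 1) ∧ ((∏ i, lam i) ^ d = 1) ∧
    ∀ i, w ((Pi.single i 1 : Fin r → ℂ)) = lam i • (Pi.single (σ i) 1 : Fin r → ℂ)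

/-!
The diagonal element `diag(μ, μ, μ⁻², 1, …, 1)` has determinant `1` and entries that are
`de`-th roots of unity, so it lies in `G(de,e,r)`; it acts by `μ` on the root `e₀ − e₁`.
A third coordinate is needed to absorb the determinant `μ²`.
-/

section DiagonalUnits

variable {ι R : Type*} [CommRing R]

def diagonalUnitsEquiv (u : ι → Rˣ) : (ι → R) ≃ₗ[R] (ι → R) :=
  LinearEquiv.piCongrRight fun i => LinearEquiv.smulOfUnit (u i)

@[simp]
theorem diagonalUnitsEquiv_apply (u : ι → Rˣ) (x : ι → R) (i : ι) :
    diagonalUnitsEquiv u x i = u i * x i :=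
  rfl

variable [DecidableEq ι]

theorem diagonalUnitsEquiv_single (u : ι → Rˣ) (i : ι) :
    diagonalUnitsEquiv u (Pi.single i 1) = (u i : R) • Pi.single i 1 := by
  ext k
  rcases eq_or_ne k i with rfl | h <;> simp [*]

theorem diagonalUnitsEquiv_single_sub_smul_single (u : ι → Rˣ) {i j : ι} (hij : u i = u j)
    (ζ : R) :
    diagonalUnitsEquiv u (Pi.single i 1 - ζ • Pi.single j 1) =
      (u i : R) • (Pi.single i 1 - ζ • Pi.single j 1) := by
  rw [map_sub, map_smul, diagonalUnitsEquiv_single, diagonalUnitsEquiv_single, hij, smul_sub,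
    smul_comm ζ]

end DiagonalUnits

theorem memG_diagonalUnitsEquiv {d e r : ℕ} (u : Fin r → ℂˣ) (hu : u ^ (d * e) = 1)
    (hprod : (∏ i, u i) ^ d = 1) : MemG d e r (diagonalUnitsEquiv u) := by
  refine ⟨1, fun i => u i, fun i => ?_, ?_, fun i => diagonalUnitsEquiv_single u i⟩
  · rw [← Units.val_pow_eq_pow_val, ← Pi.pow_apply, hu, Pi.one_apply, Units.val_one]
  · rw [← Units.coe_prod, ← Units.val_pow_eq_pow_val, hprod, Units.val_one]

theorem exists_pow_eq_one_prod_eq_one_apply_eq {ι G : Type*} [Fintype ι] [DecidableEq ι]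
    [CommGroup G] {a b c : ι} (hab : a ≠ b) (hac : a ≠ c) (hbc : b ≠ c) {g : G} {n : ℕ}
    (hg : g ^ n = 1) :
    ∃ u : ι → G, u ^ n = 1 ∧ ∏ i, u i = 1 ∧ u a = g ∧ u b = g := by
  refine ⟨Pi.mulSingle a g * Pi.mulSingle b g * Pi.mulSingle c (g ^ 2)⁻¹, ?_, ?_, ?_, ?_⟩
  · simp only [mul_pow, ← Pi.mulSingle_pow, inv_pow, pow_right_comm g 2 n, hg, one_pow, inv_one,
      Pi.mulSingle_one, mul_one]
  · simp only [Pi.mul_apply, Finset.prod_mul_distrib, Finset.prod_pi_mulSingle',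
      Finset.mem_univ, if_true]
    group
  · simp [hab, hac]
  · simp [hab.symm, hbc]

/-- For `r ≥ 3`, every `de`-th root of unity `μ` occurs as an
eigenvalue of some `w ∈ G(de,e,r)` on a root `e_i − ζ·e_j` (`i ≠ j`, `ζ^{de} = 1`). -/
theorem stmt_18 (d e r : ℕ) (hd : 0 < d) (he : 0 < e) (hr : 3 ≤ r)
    (μ : ℂ) (hμ : μ ^ (d * e) = 1) :
    ∃ w : (Fin r → ℂ) ≃ₗ[ℂ] (Fin r → ℂ), MemG d e r w ∧
      ∃ i j : Fin r, i ≠ j ∧ ∃ ζ : ℂ, ζ ^ (d * e) = 1 ∧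
        w ((Pi.single i 1 : Fin r → ℂ) - ζ • (Pi.single j 1 : Fin r → ℂ)) =
          μ • ((Pi.single i 1 : Fin r → ℂ) - ζ • (Pi.single j 1 : Fin r → ℂ)) := by
  let m : ℂˣ := Units.ofPowEqOne μ (d * e) hμ (Nat.mul_pos hd he).ne'
  have hm : m ^ (d * e) = 1 := Units.pow_ofPowEqOne hμ _
  let i₀ : Fin r := ⟨0, by omega⟩
  let i₁ : Fin r := ⟨1, by omega⟩
  have h₀₁ : i₀ ≠ i₁ := by simp [i₀, i₁, Fin.ext_iff]
  obtain ⟨u, hu, hprod, hu₀, hu₁⟩ := exists_pow_eq_one_prod_eq_one_apply_eq (c := ⟨2, by omega⟩)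
    h₀₁ (by simp [i₀, Fin.ext_iff]) (by simp [i₁, Fin.ext_iff]) hm
  refine ⟨diagonalUnitsEquiv u, memG_diagonalUnitsEquiv u hu (by rw [hprod, one_pow]),
    i₀, i₁, h₀₁, 1, one_pow _, ?_⟩
  rw [diagonalUnitsEquiv_single_sub_smul_single u (hu₀.trans hu₁.symm), hu₀,
    Units.val_ofPowEqOne]
end
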